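/- arXiv:2601.21763 — 5 statements merged into one kernel-verified Lean document; each statement's English description precedes it below -/
import Mathlib

section
/- Let P be a Markov kernel on ℝ^d that is reversible with respect to a probability measure π. Suppose π satisfies the generalized three-set isoperimetric inequality with increasing functions F : (0,1/2] → ℝ₊ and Υ : ℝ₊ → ℝ₊, and P satisfies the close-coupling condition with constants ε, δ > 0. Then for every θ ∈ (0,1) and every measurable set S ⊆ ℝ^d with 0 < π(S) ≤ 1/2, it holds that ∫_S P(x, Sᶜ) π(dx) ≥ (ε/2) · min{ 1−θ , Υ(δ) · inf_{t∈(0,1/2]} F(θt)/(2t) } · π(S); that is, the conductance Φ(P) is at least (ε/2) · min{ 1−θ , Υ(δ) · inf_{t∈(0,1/2]} F(θt)/(2t) }. -/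
open MeasureTheory

/-- Total variation distance: supremum over measurable sets of the difference of measures. -/
noncomputable def tvDist {E : Type*} [MeasurableSpace E] (μ ν : Measure E) : ℝ :=
  ⨆ A : {A : Set E // MeasurableSet A}, |(μ A.1).toReal - (ν A.1).toReal|

/-- Distance between two sets: infimum of pairwise distances. -/
noncomputable def setDist {E : Type*} [PseudoMetricSpace E] (S T : Set E) : ℝ :=
  sInf (Set.image2 dist S T)

set_option maxHeartbeats 1000000 in
/-- conductance lower bound from the generalized three-set isoperimetric
inequality and the close-coupling condition.  Here `μ` plays the role of the target
distribution π. -/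

theorem conductance_via_isoperimetry {d : ℕ}
    (μ : Measure (EuclideanSpace ℝ (Fin d))) [IsProbabilityMeasure μ]
    (P : ProbabilityTheory.Kernel (EuclideanSpace ℝ (Fin d)) (EuclideanSpace ℝ (Fin d)))
    [ProbabilityTheory.IsMarkovKernel P]
    -- reversibility of P with respect to μ
    (hrev : ∀ A B : Set (EuclideanSpace ℝ (Fin d)), MeasurableSet A → MeasurableSet B →
      ∫⁻ x in A, P x B ∂μ = ∫⁻ x in B, P x A ∂μ)
    (F Υ : ℝ → ℝ) (ε δ : ℝ) (hε : 0 < ε) (hδ : 0 < δ)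
    -- F : (0,1/2] → ℝ₊ increasing
    (hFmono : ∀ s t : ℝ, 0 < s → s ≤ t → t ≤ 1/2 → F s ≤ F t)
    (hFnonneg : ∀ t : ℝ, 0 < t → t ≤ 1/2 → 0 ≤ F t)
    -- Υ : ℝ₊ → ℝ₊ increasing
    (hΥmono : ∀ s t : ℝ, 0 ≤ s → s ≤ t → Υ s ≤ Υ t)
    (hΥnonneg : ∀ t : ℝ, 0 ≤ t → 0 ≤ Υ t)
    -- generalized three-set isoperimetric inequality for μ
    (hiso : ∀ S₁ S₂ S₃ : Set (EuclideanSpace ℝ (Fin d)),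
      MeasurableSet S₁ → MeasurableSet S₂ → MeasurableSet S₃ →
      Disjoint S₁ S₂ → Disjoint S₁ S₃ → Disjoint S₂ S₃ → S₁ ∪ S₂ ∪ S₃ = Set.univ →
      0 < min (μ S₁).toReal (μ S₂).toReal → min (μ S₁).toReal (μ S₂).toReal ≤ 1/2 →
      Υ (setDist S₁ S₂) * F (min (μ S₁).toReal (μ S₂).toReal) ≤ (μ S₃).toReal)
    -- close-coupling condition for P
    (hcc : ∀ x y : EuclideanSpace ℝ (Fin d), ‖x - y‖ < δ → tvDist (P x) (P y) < 1 - ε)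
    (θ : ℝ) (hθ₀ : 0 < θ) (hθ₁ : θ < 1)
    (S : Set (EuclideanSpace ℝ (Fin d))) (hS : MeasurableSet S)
    (hS₀ : 0 < (μ S).toReal) (hS₁ : (μ S).toReal ≤ 1/2) :
    (∫⁻ x in S, P x Sᶜ ∂μ).toReal ≥
      ε / 2 * min (1 - θ) (Υ δ * ⨅ t : Set.Ioc (0:ℝ) (1/2), F (θ * t.1) / (2 * t.1)) *
        (μ S).toReal := by
  classical
  set ε2 : ENNReal := ENNReal.ofReal (ε / 2) with hε2def
  set T₁ : Set (EuclideanSpace ℝ (Fin d)) := S ∩ {x | P x Sᶜ < ε2} with hT₁def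
  set T₂ : Set (EuclideanSpace ℝ (Fin d)) := Sᶜ ∩ {x | P x S < ε2} with hT₂def
  have hT₁m : MeasurableSet T₁ :=
    hS.inter (measurableSet_lt (P.measurable_coe hS.compl) measurable_const)
  have hT₂m : MeasurableSet T₂ :=
    hS.compl.inter (measurableSet_lt (P.measurable_coe hS) measurable_const)
  set a : ℝ := (μ S).toReal with hadef
  -- the lintegral is finite
  have hIle : ∫⁻ x in S, P x Sᶜ ∂μ ≤ μ S := by
    calc ∫⁻ x in S, P x Sᶜ ∂μ ≤ ∫⁻ _ in S, 1 ∂μ := lintegral_mono fun x => prob_le_one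
      _ = μ S := setLIntegral_one S
  have hIne : ∫⁻ x in S, P x Sᶜ ∂μ ≠ ⊤ := ne_top_of_le_ne_top (measure_ne_top μ S) hIle
  have hIJ : ∫⁻ x in S, P x Sᶜ ∂μ = ∫⁻ x in Sᶜ, P x S ∂μ := hrev S Sᶜ hS hS.compl
  -- first lower bound
  have hlb1 : ε2 * μ (S \ T₁) ≤ ∫⁻ x in S, P x Sᶜ ∂μ := by
    calc ε2 * μ (S \ T₁) = ∫⁻ _ in S \ T₁, ε2 ∂μ := (setLIntegral_const _ _).symm
      _ ≤ ∫⁻ x in S \ T₁, P x Sᶜ ∂μ := by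
          refine setLIntegral_mono' (hS.diff hT₁m) fun x hx => ?_
          exact not_lt.mp fun h => hx.2 ⟨hx.1, h⟩
      _ ≤ ∫⁻ x in S, P x Sᶜ ∂μ := lintegral_mono_set Set.diff_subset
  have hlb2 : ε2 * μ (Sᶜ \ T₂) ≤ ∫⁻ x in S, P x Sᶜ ∂μ := by
    rw [hIJ]
    calc ε2 * μ (Sᶜ \ T₂) = ∫⁻ _ in Sᶜ \ T₂, ε2 ∂μ := (setLIntegral_const _ _).symm
      _ ≤ ∫⁻ x in Sᶜ \ T₂, P x S ∂μ := by
          refine setLIntegral_mono' (hS.compl.diff hT₂m) fun x hx => ?_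
          exact not_lt.mp fun h => hx.2 ⟨hx.1, h⟩
      _ ≤ ∫⁻ x in Sᶜ, P x S ∂μ := lintegral_mono_set Set.diff_subset
  have hε2r : (0:ℝ) ≤ ε / 2 := by linarith
  have h1 : ε / 2 * (μ (S \ T₁)).toReal ≤ (∫⁻ x in S, P x Sᶜ ∂μ).toReal := by
    have := ENNReal.toReal_mono hIne hlb1
    rwa [ENNReal.toReal_mul, ENNReal.toReal_ofReal hε2r] at this
  have h2 : ε / 2 * (μ (Sᶜ \ T₂)).toReal ≤ (∫⁻ x in S, P x Sᶜ ∂μ).toReal := by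
    have := ENNReal.toReal_mono hIne hlb2
    rwa [ENNReal.toReal_mul, ENNReal.toReal_ofReal hε2r] at this
  have hdiff1 : (μ (S \ T₁)).toReal = a - (μ T₁).toReal := by
    rw [measure_diff Set.inter_subset_left hT₁m.nullMeasurableSet (measure_ne_top μ T₁),
      ENNReal.toReal_sub_of_le (measure_mono Set.inter_subset_left) (measure_ne_top μ S)]
  have hdiff2 : (μ (Sᶜ \ T₂)).toReal = (μ Sᶜ).toReal - (μ T₂).toReal := by
    rw [measure_diff Set.inter_subset_left hT₂m.nullMeasurableSet (measure_ne_top μ T₂),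
      ENNReal.toReal_sub_of_le (measure_mono Set.inter_subset_left) (measure_ne_top μ Sᶜ)]
  have hcompl : (μ Sᶜ).toReal = 1 - a := by
    rw [prob_compl_eq_one_sub hS,
      ENNReal.toReal_sub_of_le prob_le_one ENNReal.one_ne_top, ENNReal.toReal_one]
  have hT₁S : (μ T₁).toReal ≤ a :=
    ENNReal.toReal_mono (measure_ne_top μ S) (measure_mono Set.inter_subset_left)
  have hT₂S : (μ T₂).toReal ≤ (μ Sᶜ).toReal :=
    ENNReal.toReal_mono (measure_ne_top μ Sᶜ) (measure_mono Set.inter_subset_left)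
  -- the infimum is bounded below by 0
  have hbdd : BddBelow (Set.range fun t : Set.Ioc (0:ℝ) (1/2) => F (θ * t.1) / (2 * t.1)) := by
    refine ⟨0, ?_⟩
    rintro _ ⟨t, rfl⟩
    have ht0 : 0 < t.1 := t.2.1
    have ht1 : t.1 ≤ 1/2 := t.2.2
    have hθt : θ * t.1 ≤ 1/2 := by nlinarith
    exact div_nonneg (hFnonneg _ (by positivity) hθt) (by positivity)
  set Inf := ⨅ t : Set.Ioc (0:ℝ) (1/2), F (θ * t.1) / (2 * t.1) with hInfdef
  have hInf0 : 0 ≤ Inf := by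
    refine Real.iInf_nonneg fun t => ?_
    have ht0 : 0 < t.1 := t.2.1
    have ht1 : t.1 ≤ 1/2 := t.2.2
    have hθt : θ * t.1 ≤ 1/2 := by nlinarith
    exact div_nonneg (hFnonneg _ (by positivity) hθt) (by positivity)
  have hΥδ : (0:ℝ) ≤ Υ δ := hΥnonneg δ hδ.le
  have hK0 : (0:ℝ) ≤ Υ δ * Inf := mul_nonneg hΥδ hInf0
  set m : ℝ := min (1 - θ) (Υ δ * Inf) with hmdef
  have hm1 : m ≤ 1 - θ := min_le_left _ _
  have hm2 : m ≤ Υ δ * Inf := min_le_right _ _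
  rw [ge_iff_le]
  have hstep : ε / 2 * m * a ≤ ε / 2 * ((1 - θ) * a) := by
    rw [mul_assoc]
    exact mul_le_mul_of_nonneg_left (mul_le_mul_of_nonneg_right hm1 hS₀.le) hε2r
  by_cases hc1 : (μ T₁).toReal < θ * a
  · have key : ε / 2 * ((1 - θ) * a) ≤ ε / 2 * (μ (S \ T₁)).toReal := by
      refine mul_le_mul_of_nonneg_left ?_ hε2r
      rw [hdiff1]; linarith
    linarith
  by_cases hc2 : (μ T₂).toReal < θ * (μ Sᶜ).toReal
  · have haSc : a ≤ (μ Sᶜ).toReal := by rw [hcompl]; linarith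
    have key : ε / 2 * ((1 - θ) * a) ≤ ε / 2 * (μ (Sᶜ \ T₂)).toReal := by
      refine mul_le_mul_of_nonneg_left ?_ hε2r
      rw [hdiff2]
      nlinarith [mul_le_mul_of_nonneg_left haSc (by linarith : (0:ℝ) ≤ 1 - θ)]
    linarith
  push_neg at hc1 hc2
  -- main case
  have haSc : a ≤ (μ Sᶜ).toReal := by rw [hcompl]; linarith
  have hθa : 0 < θ * a := by positivity
  have hT₁pos : 0 < (μ T₁).toReal := lt_of_lt_of_le hθa hc1
  have hT₂pos : 0 < (μ T₂).toReal := by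
    have h' : 0 < θ * (μ Sᶜ).toReal := mul_pos hθ₀ (lt_of_lt_of_le hS₀ haSc)
    linarith
  have hT₁ne : T₁.Nonempty := by
    rcases T₁.eq_empty_or_nonempty with h | h
    · rw [h] at hT₁pos; simp at hT₁pos
    · exact h
  have hT₂ne : T₂.Nonempty := by
    rcases T₂.eq_empty_or_nonempty with h | h
    · rw [h] at hT₂pos; simp at hT₂pos
    · exact h
  -- distance between T₁ and T₂ is at least δ
  have hprobtoReal : ∀ (ν : Measure (EuclideanSpace ℝ (Fin d))) [IsProbabilityMeasure ν]
      (A : Set (EuclideanSpace ℝ (Fin d))), (ν A).toReal ≤ 1 := by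
    intro ν _ A
    have : (ν A).toReal ≤ (ν Set.univ).toReal :=
      ENNReal.toReal_mono (measure_ne_top ν _) (measure_mono (Set.subset_univ A))
    simpa using this
  have hdist : ∀ x ∈ T₁, ∀ y ∈ T₂, δ ≤ dist x y := by
    intro x hx y hy
    by_contra h
    push_neg at h
    have htv := hcc x y (by rwa [← dist_eq_norm])
    have hxS : (P x Sᶜ).toReal < ε / 2 := by
      have h' : P x Sᶜ < ENNReal.ofReal (ε / 2) := hx.2
      have hle := ENNReal.toReal_mono ENNReal.ofReal_ne_top h'.le
      rw [ENNReal.toReal_ofReal hε2r] at hle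
      rcases lt_or_eq_of_le hle with h'' | h''
      · exact h''
      · exfalso
        rw [← ENNReal.ofReal_toReal (measure_ne_top (P x) Sᶜ), h''] at h'
        exact lt_irrefl _ h'
    have hyS : (P y S).toReal < ε / 2 := by
      have h' : P y S < ENNReal.ofReal (ε / 2) := hy.2
      have := ENNReal.toReal_mono ENNReal.ofReal_ne_top h'.le
      rw [ENNReal.toReal_ofReal hε2r] at this
      rcases lt_or_eq_of_le this with h'' | h''
      · exact h''
      · exfalso
        rw [← ENNReal.ofReal_toReal (measure_ne_top (P y) S), h''] at h'
        exact lt_irrefl _ h'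
    have hyN : 1 - ε / 2 ≤ (P y Sᶜ).toReal := by
      have : (P y Sᶜ).toReal = 1 - (P y S).toReal := by
        rw [prob_compl_eq_one_sub hS,
          ENNReal.toReal_sub_of_le prob_le_one ENNReal.one_ne_top, ENNReal.toReal_one]
      rw [this]; linarith
    have hb : BddAbove (Set.range fun A : {A : Set (EuclideanSpace ℝ (Fin d)) //
        MeasurableSet A} => |((P x) A.1).toReal - ((P y) A.1).toReal|) := by
      refine ⟨1, ?_⟩
      rintro _ ⟨A, rfl⟩
      have h1' := hprobtoReal (P x) A.1
      have h2' := hprobtoReal (P y) A.1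
      have h3' : (0:ℝ) ≤ ((P x) A.1).toReal := ENNReal.toReal_nonneg
      have h4' : (0:ℝ) ≤ ((P y) A.1).toReal := ENNReal.toReal_nonneg
      rw [abs_sub_le_iff]
      constructor <;> linarith
    have hge : 1 - ε ≤ tvDist (P x) (P y) := by
      have hA : 1 - ε ≤ |((P x) Sᶜ).toReal - ((P y) Sᶜ).toReal| := by
        rw [abs_sub_comm]
        refine le_trans ?_ (le_abs_self _)
        linarith
      exact le_trans hA (le_ciSup hb ⟨Sᶜ, hS.compl⟩)
    linarith
  have hsd : δ ≤ setDist T₁ T₂ := by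
    refine le_csInf (hT₁ne.image2 hT₂ne) ?_
    rintro z ⟨x, hx, y, hy, rfl⟩
    exact hdist x hx y hy
  -- apply the isoperimetric inequality
  set T₃ : Set (EuclideanSpace ℝ (Fin d)) := (T₁ ∪ T₂)ᶜ with hT₃def
  have hT₃m : MeasurableSet T₃ := (hT₁m.union hT₂m).compl
  have hd12 : Disjoint T₁ T₂ :=
    (disjoint_compl_right (a := S)).mono Set.inter_subset_left Set.inter_subset_left
  have hd13 : Disjoint T₁ T₃ := disjoint_compl_right.mono_left Set.subset_union_left
  have hd23 : Disjoint T₂ T₃ := disjoint_compl_right.mono_left Set.subset_union_right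
  have huniv : T₁ ∪ T₂ ∪ T₃ = Set.univ := Set.union_compl_self _
  have hminpos : 0 < min (μ T₁).toReal (μ T₂).toReal := lt_min hT₁pos hT₂pos
  have hminle : min (μ T₁).toReal (μ T₂).toReal ≤ 1/2 :=
    le_trans (min_le_left _ _) (le_trans hT₁S hS₁)
  have hiso3 := hiso T₁ T₂ T₃ hT₁m hT₂m hT₃m hd12 hd13 hd23 huniv hminpos hminle
  -- θ * a ≤ min
  have hθamin : θ * a ≤ min (μ T₁).toReal (μ T₂).toReal := by
    refine le_min hc1 (le_trans ?_ hc2)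
    nlinarith
  have hθa12 : θ * a ≤ 1/2 := le_trans hθamin hminle
  have hF1 : F (θ * a) ≤ F (min (μ T₁).toReal (μ T₂).toReal) :=
    hFmono _ _ hθa hθamin hminle
  have hFnn : 0 ≤ F (θ * a) := hFnonneg _ hθa hθa12
  have hΥ1 : Υ δ ≤ Υ (setDist T₁ T₂) := hΥmono _ _ hδ.le hsd
  have hA : Υ δ * F (θ * a) ≤ (μ T₃).toReal := by
    refine le_trans ?_ hiso3
    exact mul_le_mul hΥ1 hF1 hFnn (hΥnonneg _ (le_trans hδ.le hsd))
  -- decompose T₃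
  have hT₃eq : T₃ = (S \ T₁) ∪ (Sᶜ \ T₂) := by
    ext x
    by_cases hx : x ∈ S <;>
      simp only [hT₃def, hT₁def, hT₂def, Set.mem_compl_iff, Set.mem_union, Set.mem_inter_iff,
        Set.mem_diff, Set.mem_setOf_eq, hx, not_true, not_false_iff] <;> tauto
  have hd' : Disjoint (S \ T₁) (Sᶜ \ T₂) :=
    (disjoint_compl_right (a := S)).mono Set.diff_subset Set.diff_subset
  have hμ3 : (μ T₃).toReal = (μ (S \ T₁)).toReal + (μ (Sᶜ \ T₂)).toReal := by
    rw [hT₃eq, measure_union hd' (hS.compl.diff hT₂m),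
      ENNReal.toReal_add (measure_ne_top μ _) (measure_ne_top μ _)]
  -- bound via the infimum
  have hinf : Inf ≤ F (θ * a) / (2 * a) := ciInf_le hbdd ⟨a, hS₀, hS₁⟩
  have hKa : Υ δ * Inf * a ≤ Υ δ * F (θ * a) / 2 := by
    have h' : Υ δ * (F (θ * a) / (2 * a)) * a = Υ δ * F (θ * a) / 2 := by
      field_simp
    calc Υ δ * Inf * a ≤ Υ δ * (F (θ * a) / (2 * a)) * a := by
          refine mul_le_mul_of_nonneg_right (mul_le_mul_of_nonneg_left hinf hΥδ) hS₀.le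
      _ = Υ δ * F (θ * a) / 2 := h'
  have hC : ε / 2 * (μ T₃).toReal ≤ (∫⁻ x in S, P x Sᶜ ∂μ).toReal +
      (∫⁻ x in S, P x Sᶜ ∂μ).toReal := by
    rw [hμ3, mul_add]; linarith
  have hAB : ε / 2 * (2 * (Υ δ * Inf * a)) ≤ ε / 2 * (μ T₃).toReal := by
    refine mul_le_mul_of_nonneg_left ?_ hε2r
    linarith
  have hfin : ε / 2 * m * a ≤ ε / 2 * (Υ δ * Inf) * a := by
    refine mul_le_mul_of_nonneg_right (mul_le_mul_of_nonneg_left hm2 hε2r) hS₀.le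
  nlinarith [hC, hAB, hfin]
end

section
/- Let π be a probability measure on ℝ^d satisfying a log-Sobolev inequality with constant C_LSI > 0. Then π satisfies the generalized three-set isoperimetric inequality with F(t) = (t/2)·log(2/t) and Υ(δ) = δ² / (C_LSI + (1 + e⁻¹)·δ²): for every measurable partition ℝ^d = S₁ ⊔ S₂ ⊔ S₃ with 0 < min{π(S₁),π(S₂)} ≤ 1/2, one has π(S₃) ≥ Υ(d(S₁,S₂)) · F(min{π(S₁), π(S₂)}), where d(S₁,S₂) = inf{‖x−y‖ : x ∈ S₁, y ∈ S₂}. -/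
open MeasureTheory

lemma neg_exp_le_mul_log {s : ℝ} (hs : 0 ≤ s) : -Real.exp (-1) ≤ s * Real.log s := by
  rcases eq_or_lt_of_le hs with h | h
  · rw [← h]
    simp [(Real.exp_pos (-1)).le]
  · have he : (0:ℝ) < Real.exp 1 := Real.exp_pos 1
    have hx : 0 < (s * Real.exp 1)⁻¹ := by positivity
    have h1 := Real.log_le_sub_one_of_pos hx
    rw [Real.log_inv, Real.log_mul h.ne' he.ne', Real.log_exp] at h1
    have h2 : -Real.log s ≤ (s * Real.exp 1)⁻¹ := by linarith
    have h3 := mul_le_mul_of_nonneg_left h2 hs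
    have h4 : s * (s * Real.exp 1)⁻¹ = (Real.exp 1)⁻¹ := by field_simp
    rw [Real.exp_neg]
    nlinarith [h3, h4]

lemma tlog_lower {t p : ℝ} (ht : 0 ≤ t) (hp : 0 < p) :
    -(p * Real.exp (-1)) ≤ t * Real.log (t / p) := by
  have h := neg_exp_le_mul_log (div_nonneg ht hp.le)
  have h2 := mul_le_mul_of_nonneg_left h hp.le
  have he : p * (t / p * Real.log (t / p)) = t * Real.log (t / p) := by
    field_simp
  nlinarith [h2, he]

lemma keyineq {a c : ℝ} (ha : 0 < a) (ha2 : a ≤ 1/2) (hc : 0 ≤ c) :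
    a / 2 * Real.log (2 / a) ≤ -(a * Real.log (a + c)) + c := by
  have hpos : (0:ℝ) < 1 + c / a := by positivity
  have h1 : Real.log (1 + c / a) ≤ c / a := by
    have := Real.log_le_sub_one_of_pos hpos; linarith
  have h1' : a * Real.log (1 + c / a) ≤ c := by
    have h := mul_le_mul_of_nonneg_left h1 ha.le
    have : a * (c / a) = c := by field_simp
    linarith
  have h2 : Real.log (2 * a) ≤ 0 := Real.log_nonpos (by positivity) (by linarith)
  have h3 : Real.log (a + c) = Real.log a + Real.log (1 + c / a) := by
    rw [← Real.log_mul ha.ne' hpos.ne']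
    congr 1
    field_simp
  have h4 : Real.log (2 / a) = Real.log 2 - Real.log a := Real.log_div two_ne_zero ha.ne'
  have h5 : Real.log (2 * a) = Real.log 2 + Real.log a := Real.log_mul two_ne_zero ha.ne'
  have h6 : a / 2 * Real.log (2 * a) ≤ 0 :=
    mul_nonpos_iff.2 (Or.inl ⟨by linarith, h2⟩)
  rw [h5] at h6
  rw [h4, h3]
  nlinarith [h1', h6]

lemma final_arith {C δ a c : ℝ} (hC : 0 < C) (hδ : 0 < δ) (ha : 0 < a)
    (ha2 : a ≤ 1/2) (hc : 0 ≤ c)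
    (H : -(a * Real.log (a + c)) ≤ c * (C / δ ^ 2 + Real.exp (-1))) :
    δ ^ 2 / (C + (1 + Real.exp (-1)) * δ ^ 2) * (a / 2 * Real.log (2 / a)) ≤ c := by
  have hkey := keyineq ha ha2 hc
  have h1 : a / 2 * Real.log (2 / a) ≤ c * (C / δ ^ 2 + 1 + Real.exp (-1)) := by
    nlinarith [hkey, H]
  have hD : 0 < C + (1 + Real.exp (-1)) * δ ^ 2 := by positivity
  rw [div_mul_eq_mul_div, div_le_iff₀ hD]
  have h2 : δ ^ 2 * (a / 2 * Real.log (2 / a)) ≤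
      δ ^ 2 * (c * (C / δ ^ 2 + 1 + Real.exp (-1))) :=
    mul_le_mul_of_nonneg_left h1 (sq_nonneg δ)
  have hcc : δ ^ 2 * (C / δ ^ 2) = C := mul_div_cancel₀ C (by positivity)
  have h3 : δ ^ 2 * (c * (C / δ ^ 2 + 1 + Real.exp (-1))) =
      c * (C + (1 + Real.exp (-1)) * δ ^ 2) := by
    calc δ ^ 2 * (c * (C / δ ^ 2 + 1 + Real.exp (-1)))
        = c * (δ ^ 2 * (C / δ ^ 2)) + c * (1 + Real.exp (-1)) * δ ^ 2 := by ring
      _ = c * (C + (1 + Real.exp (-1)) * δ ^ 2) := by rw [hcc]; ring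
  linarith

set_option maxHeartbeats 1000000 in
theorem aux_iso {d : ℕ} (C : ℝ) (hC : 0 < C)
    (μ : Measure (EuclideanSpace ℝ (Fin d))) [IsProbabilityMeasure μ]
    (hlsi : ∀ u : EuclideanSpace ℝ (Fin d) → ℝ, LocallyLipschitz u →
      ∫ x, (u x) ^ 2 * Real.log ((u x) ^ 2 / ∫ y, (u y) ^ 2 ∂μ) ∂μ ≤
        C * ∫ x, ‖gradient u x‖ ^ 2 ∂μ)
    (S₁ S₂ S₃ : Set (EuclideanSpace ℝ (Fin d)))
    (h₁ : MeasurableSet S₁) (h₃ : MeasurableSet S₃)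
    (h₁₂ : Disjoint S₁ S₂) (h₁₃ : Disjoint S₁ S₃) (h₂₃ : Disjoint S₂ S₃)
    (hcover : S₁ ∪ S₂ ∪ S₃ = Set.univ)
    (ha0 : 0 < (μ S₁).toReal) (ha2 : (μ S₁).toReal ≤ 1/2) :
    (μ S₃).toReal ≥
      (setDist S₁ S₂) ^ 2 / (C + (1 + Real.exp (-1)) * (setDist S₁ S₂) ^ 2) *
        ((μ S₁).toReal / 2 * Real.log (2 / (μ S₁).toReal)) := by
  have hδ0 : 0 ≤ setDist S₁ S₂ := by
    apply Real.sInf_nonneg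
    rintro r ⟨x, hx, y, hy, rfl⟩
    exact dist_nonneg
  rcases eq_or_lt_of_le hδ0 with hδ | hδ
  · rw [← hδ]
    simp
  · set δ := setDist S₁ S₂ with hδdef
    have hS₁ne : S₁.Nonempty := by
      rcases Set.eq_empty_or_nonempty S₁ with h | h
      · rw [h] at ha0; simp at ha0
      · exact h
    set a := (μ S₁).toReal with hadef
    set c := (μ S₃).toReal with hcdef
    have hc0 : 0 ≤ c := ENNReal.toReal_nonneg
    have hmem : ∀ x, x ∈ S₁ ∨ x ∈ S₂ ∨ x ∈ S₃ := by
      intro x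
      have : x ∈ S₁ ∪ S₂ ∪ S₃ := hcover ▸ Set.mem_univ x
      simpa [Set.mem_union, or_assoc] using this
    have hac : a + c ≤ 1 := by
      have hm : μ (S₁ ∪ S₃) = μ S₁ + μ S₃ := measure_union h₁₃ h₃
      have h1 : (μ (S₁ ∪ S₃)).toReal ≤ (μ Set.univ).toReal :=
        ENNReal.toReal_mono (measure_ne_top μ _) (measure_mono (Set.subset_univ _))
      rw [hm, ENNReal.toReal_add (measure_ne_top μ _) (measure_ne_top μ _),
        measure_univ, ENNReal.toReal_one] at h1
      exact h1
    -- the test function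
    set u : EuclideanSpace ℝ (Fin d) → ℝ :=
      fun x => max (1 - Metric.infDist x S₁ / δ) 0 with hu
    have hu_le1 : ∀ x, u x ≤ 1 := by
      intro x
      apply max_le _ zero_le_one
      have h1 : 0 ≤ Metric.infDist x S₁ / δ :=
        div_nonneg Metric.infDist_nonneg hδ.le
      linarith
    have hu_nonneg : ∀ x, 0 ≤ u x := fun x => le_max_right _ _
    have hu_S₁ : ∀ x ∈ S₁, u x = 1 := by
      intro x hx
      simp [hu, Metric.infDist_zero_of_mem hx]
    have hu_S₂ : ∀ x ∈ S₂, u x = 0 := by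
      intro x hx
      have hge : δ ≤ Metric.infDist x S₁ := by
        by_contra hlt
        push_neg at hlt
        obtain ⟨y, hy, hd⟩ := (Metric.infDist_lt_iff hS₁ne).1 hlt
        have hle : δ ≤ dist y x := by
          apply csInf_le
          · exact ⟨0, by rintro r ⟨p, hp, q, hq, rfl⟩; exact dist_nonneg⟩
          · exact Set.mem_image2_of_mem hy hx
        rw [dist_comm] at hle
        linarith
      have h0 : 1 - Metric.infDist x S₁ / δ ≤ 0 := by
        rw [sub_nonpos]
        exact (one_le_div hδ).2 hge
      simp [hu, max_eq_right h0]
    -- Lipschitz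
    set K : NNReal := (1/δ).toNNReal with hK
    have hKcoe : (K : ℝ) = 1/δ := Real.coe_toNNReal _ (by positivity)
    have hlip : LipschitzWith K u := by
      apply LipschitzWith.max_const
      apply LipschitzWith.of_dist_le_mul
      intro x y
      have h := (Metric.lipschitz_infDist_pt S₁).dist_le_mul x y
      rw [NNReal.coe_one, one_mul, Real.dist_eq] at h
      rw [Real.dist_eq, hKcoe]
      have heq : (1 - Metric.infDist x S₁ / δ) - (1 - Metric.infDist y S₁ / δ)
          = -((Metric.infDist x S₁ - Metric.infDist y S₁) / δ) := by ring
      rw [heq, abs_neg, abs_div, abs_of_pos hδ, one_div, inv_mul_eq_div]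
      exact div_le_div_of_nonneg_right h hδ.le
    have hliploc : LocallyLipschitz u := hlip.locallyLipschitz
    have hucont : Continuous u := hlip.continuous
    -- gradient facts
    have hgradeq : ∀ x, gradient u x
        = (InnerProductSpace.toDual ℝ (EuclideanSpace ℝ (Fin d))).symm (fderiv ℝ u x) :=
      fun x => rfl
    have hgradnorm : ∀ x, ‖gradient u x‖ = ‖fderiv ℝ u x‖ := by
      intro x
      rw [hgradeq x]
      exact (InnerProductSpace.toDual ℝ (EuclideanSpace ℝ (Fin d))).symm.norm_map _
    have hgrad_le : ∀ x, ‖gradient u x‖ ≤ 1/δ := by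
      intro x
      rw [hgradnorm x, ← hKcoe]
      exact norm_fderiv_le_of_lipschitz ℝ hlip
    have hgrad0 : ∀ x, x ∈ S₁ ∪ S₂ → gradient u x = 0 := by
      intro x hx
      have hfd : fderiv ℝ u x = 0 := by
        cases hx with
        | inl hx =>
          apply IsLocalMax.fderiv_eq_zero
          apply Filter.Eventually.of_forall
          intro y
          rw [hu_S₁ x hx]
          exact hu_le1 y
        | inr hx =>
          apply IsLocalMin.fderiv_eq_zero
          apply Filter.Eventually.of_forall
          intro y
          rw [hu_S₂ x hx]
          exact hu_nonneg y
      rw [hgradeq x, hfd, map_zero]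
    -- integrability of u^2
    have hu2meas : Measurable fun x => u x ^ 2 := (hucont.pow 2).measurable
    have hu2_le1 : ∀ x, u x ^ 2 ≤ 1 := by
      intro x
      nlinarith [hu_nonneg x, hu_le1 x]
    have hint_u2 : Integrable (fun x => u x ^ 2) μ := by
      apply Integrable.mono' (integrable_const (1:ℝ)) hu2meas.aestronglyMeasurable
      apply Filter.Eventually.of_forall
      intro x
      rw [Real.norm_eq_abs, abs_of_nonneg (by positivity)]
      exact hu2_le1 x
    set p := ∫ y, u y ^ 2 ∂μ with hp
    have hp_ge : a ≤ p := by
      have hind : Integrable (S₁.indicator fun _ => (1:ℝ)) μ :=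
        (integrable_const 1).indicator h₁
      have hmono : (S₁.indicator fun _ => (1:ℝ)) ≤ fun x => u x ^ 2 := by
        intro x
        show S₁.indicator (fun _ => (1:ℝ)) x ≤ u x ^ 2
        by_cases hx : x ∈ S₁
        · rw [Set.indicator_of_mem hx, hu_S₁ x hx]; norm_num
        · rw [Set.indicator_of_notMem hx]; positivity
      have h := integral_mono hind hint_u2 hmono
      rwa [integral_indicator_const (1:ℝ) h₁, smul_eq_mul, mul_one] at h
    have hp_pos : 0 < p := lt_of_lt_of_le ha0 hp_ge
    have hp_le : p ≤ a + c := by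
      have h13 : MeasurableSet (S₁ ∪ S₃) := h₁.union h₃
      have hind : Integrable ((S₁ ∪ S₃).indicator fun _ => (1:ℝ)) μ :=
        (integrable_const 1).indicator h13
      have hmono : (fun x => u x ^ 2) ≤ (S₁ ∪ S₃).indicator fun _ => (1:ℝ) := by
        intro x
        show u x ^ 2 ≤ (S₁ ∪ S₃).indicator (fun _ => (1:ℝ)) x
        by_cases hx : x ∈ S₁ ∪ S₃
        · rw [Set.indicator_of_mem hx]; exact hu2_le1 x
        · have hx2 : x ∈ S₂ := by
            rcases hmem x with h | h | h
            · exact absurd (Or.inl h) hx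
            · exact h
            · exact absurd (Or.inr h) hx
          rw [Set.indicator_of_notMem hx, hu_S₂ x hx2]
          norm_num
      have h := integral_mono hint_u2 hind hmono
      rw [integral_indicator_const (1:ℝ) h13, smul_eq_mul, mul_one,
        measureReal_def, measure_union h₁₃ h₃,
        ENNReal.toReal_add (measure_ne_top μ _) (measure_ne_top μ _)] at h
      exact h
    have hp_le1 : p ≤ 1 := le_trans hp_le hac
    have hlogp : Real.log p ≤ 0 := Real.log_nonpos hp_pos.le hp_le1
    -- entropy integrand
    have hgmeas : Measurable fun x => u x ^ 2 * Real.log (u x ^ 2 / p) :=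
      hu2meas.mul (Real.measurable_log.comp (hu2meas.div_const p))
    have hg_lower : ∀ x, -(p * Real.exp (-1)) ≤ u x ^ 2 * Real.log (u x ^ 2 / p) :=
      fun x => tlog_lower (by positivity) hp_pos
    have hg_upper : ∀ x, u x ^ 2 * Real.log (u x ^ 2 / p) ≤ -Real.log p := by
      intro x
      by_cases hz : u x = 0
      · rw [hz]
        simpa using neg_nonneg.2 hlogp
      · have hupos : 0 < u x ^ 2 := by positivity
        rw [Real.log_div hupos.ne' hp_pos.ne']
        have hlogu : u x ^ 2 * Real.log (u x ^ 2) ≤ 0 := by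
          rcases eq_or_lt_of_le (hu2_le1 x) with h | h
          · rw [h]; simp
          · have : Real.log (u x ^ 2) < 0 := Real.log_neg hupos h
            nlinarith
        nlinarith [mul_nonneg (neg_nonneg.2 hlogp)
          (by linarith [hu2_le1 x] : (0:ℝ) ≤ 1 - u x ^ 2)]
    have hint_g : Integrable (fun x => u x ^ 2 * Real.log (u x ^ 2 / p)) μ := by
      apply Integrable.mono' (integrable_const (-Real.log p + Real.exp (-1)))
        hgmeas.aestronglyMeasurable
      apply Filter.Eventually.of_forall
      intro x
      rw [Real.norm_eq_abs, abs_le]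
      constructor
      · have h1 : -(Real.exp (-1)) ≤ -(p * Real.exp (-1)) := by
          nlinarith [Real.exp_pos (-1)]
        have h2 := hg_lower x
        have h3 : 0 ≤ -Real.log p := neg_nonneg.2 hlogp
        linarith
      · have := Real.exp_pos (-1)
        linarith [hg_upper x]
    -- entropy lower bound
    have hEnt : a * (-Real.log p) + c * (-(Real.exp (-1)))
        ≤ ∫ x, u x ^ 2 * Real.log (u x ^ 2 / p) ∂μ := by
      have hindf₁ : Integrable (S₁.indicator fun _ => -Real.log p) μ :=
        (integrable_const _).indicator h₁
      have hindf₃ : Integrable (S₃.indicator fun _ => -(Real.exp (-1))) μ :=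
        (integrable_const _).indicator h₃
      have hfg : (fun x => S₁.indicator (fun _ => -Real.log p) x
          + S₃.indicator (fun _ => -(Real.exp (-1))) x)
          ≤ fun x => u x ^ 2 * Real.log (u x ^ 2 / p) := by
        intro x
        show S₁.indicator (fun _ => -Real.log p) x
          + S₃.indicator (fun _ => -(Real.exp (-1))) x
          ≤ u x ^ 2 * Real.log (u x ^ 2 / p)
        rcases hmem x with hx | hx | hx
        · have hx3 : x ∉ S₃ := Set.disjoint_left.1 h₁₃ hx
          rw [Set.indicator_of_mem hx, Set.indicator_of_notMem hx3, add_zero,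
            hu_S₁ x hx]
          rw [one_pow, one_mul, one_div, Real.log_inv]
        · have hx1 : x ∉ S₁ := Set.disjoint_right.1 h₁₂ hx
          have hx3 : x ∉ S₃ := Set.disjoint_left.1 h₂₃ hx
          rw [Set.indicator_of_notMem hx1, Set.indicator_of_notMem hx3, add_zero,
            hu_S₂ x hx]
          norm_num
        · have hx1 : x ∉ S₁ := Set.disjoint_right.1 h₁₃ hx
          rw [Set.indicator_of_notMem hx1, Set.indicator_of_mem hx, zero_add]
          have h1 := hg_lower x
          have h2 : -(Real.exp (-1)) ≤ -(p * Real.exp (-1)) := by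
            nlinarith [Real.exp_pos (-1)]
          linarith
      have h := integral_mono (hindf₁.add hindf₃) hint_g hfg
      simp only [Pi.add_apply] at h
      rw [integral_add hindf₁ hindf₃, integral_indicator_const _ h₁,
        integral_indicator_const _ h₃, smul_eq_mul, smul_eq_mul] at h
      exact h
    -- gradient integral bound
    have hgradmeas : Measurable fun x => ‖gradient u x‖ ^ 2 := by
      have h1 : Measurable (gradient u) := by
        have := measurable_fderiv ℝ u (E := EuclideanSpace ℝ (Fin d)) (F := ℝ)
        exact ((InnerProductSpace.toDual ℝ
          (EuclideanSpace ℝ (Fin d))).symm.continuous.measurable).comp this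
      exact h1.norm.pow_const 2
    have hint_grad : Integrable (fun x => ‖gradient u x‖ ^ 2) μ := by
      apply Integrable.mono' (integrable_const ((1/δ) ^ 2))
        hgradmeas.aestronglyMeasurable
      apply Filter.Eventually.of_forall
      intro x
      rw [Real.norm_eq_abs, abs_of_nonneg (by positivity)]
      exact pow_le_pow_left₀ (norm_nonneg _) (hgrad_le x) 2
    have hgrad_int_le : ∫ x, ‖gradient u x‖ ^ 2 ∂μ ≤ (1/δ) ^ 2 * c := by
      have hind : Integrable (S₃.indicator fun _ => (1/δ) ^ 2) μ :=
        (integrable_const _).indicator h₃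
      have hmono : (fun x => ‖gradient u x‖ ^ 2) ≤ S₃.indicator fun _ => (1/δ) ^ 2 := by
        intro x
        show ‖gradient u x‖ ^ 2 ≤ S₃.indicator (fun _ => (1/δ) ^ 2) x
        by_cases hx : x ∈ S₃
        · rw [Set.indicator_of_mem hx]
          exact pow_le_pow_left₀ (norm_nonneg _) (hgrad_le x) 2
        · have hx12 : x ∈ S₁ ∪ S₂ := by
            rcases hmem x with h | h | h
            · exact Or.inl h
            · exact Or.inr h
            · exact absurd h hx
          rw [Set.indicator_of_notMem hx, hgrad0 x hx12]
          simp
      have h := integral_mono hint_grad hind hmono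
      rwa [integral_indicator_const _ h₃, smul_eq_mul, mul_comm] at h
    -- apply LSI
    have hlsiu := hlsi u hliploc
    rw [← hp] at hlsiu
    have hchain : a * (-Real.log p) + c * (-(Real.exp (-1))) ≤ C * ((1/δ) ^ 2 * c) :=
      le_trans hEnt (le_trans hlsiu (mul_le_mul_of_nonneg_left hgrad_int_le hC.le))
    have hlogmono : Real.log p ≤ Real.log (a + c) := Real.log_le_log hp_pos hp_le
    have H : -(a * Real.log (a + c)) ≤ c * (C / δ ^ 2 + Real.exp (-1)) := by
      have h1 : a * Real.log p ≤ a * Real.log (a + c) :=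
        mul_le_mul_of_nonneg_left hlogmono ha0.le
      have h2 : C * ((1/δ) ^ 2 * c) + Real.exp (-1) * c
          = c * (C / δ ^ 2 + Real.exp (-1)) := by
        field_simp
      nlinarith [hchain, h1, h2]
    exact final_arith hC hδ ha0 ha2 hc0 H


theorem three_set_isoperimetry_log_sobolev {d : ℕ} (C : ℝ) (hC : 0 < C)
    (μ : Measure (EuclideanSpace ℝ (Fin d))) [IsProbabilityMeasure μ]
    -- log-Sobolev inequality with constant C for all locally Lipschitz functions
    (hlsi : ∀ u : EuclideanSpace ℝ (Fin d) → ℝ, LocallyLipschitz u →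
      ∫ x, (u x) ^ 2 * Real.log ((u x) ^ 2 / ∫ y, (u y) ^ 2 ∂μ) ∂μ ≤
        C * ∫ x, ‖gradient u x‖ ^ 2 ∂μ)
    (S₁ S₂ S₃ : Set (EuclideanSpace ℝ (Fin d)))
    (h₁ : MeasurableSet S₁) (h₂ : MeasurableSet S₂) (h₃ : MeasurableSet S₃)
    (h₁₂ : Disjoint S₁ S₂) (h₁₃ : Disjoint S₁ S₃) (h₂₃ : Disjoint S₂ S₃)
    (hcover : S₁ ∪ S₂ ∪ S₃ = Set.univ)
    (hmin₀ : 0 < min (μ S₁).toReal (μ S₂).toReal)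
    (hmin₁ : min (μ S₁).toReal (μ S₂).toReal ≤ 1/2) :
    (μ S₃).toReal ≥
      (setDist S₁ S₂) ^ 2 / (C + (1 + Real.exp (-1)) * (setDist S₁ S₂) ^ 2) *
        (min (μ S₁).toReal (μ S₂).toReal / 2 *
          Real.log (2 / min (μ S₁).toReal (μ S₂).toReal)) := by
  have hsymm : setDist S₂ S₁ = setDist S₁ S₂ := by
    unfold setDist
    congr 1
    rw [Set.image2_swap]
    simp only [dist_comm]
  rcases le_total (μ S₁).toReal (μ S₂).toReal with h | h
  · rw [min_eq_left h] at hmin₀ hmin₁ ⊢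
    exact aux_iso C hC μ hlsi S₁ S₂ S₃ h₁ h₃ h₁₂ h₁₃ h₂₃ hcover hmin₀ hmin₁
  · rw [min_eq_right h] at hmin₀ hmin₁ ⊢
    rw [← hsymm]
    have hcover' : S₂ ∪ S₁ ∪ S₃ = Set.univ := by
      rw [Set.union_comm S₂ S₁]; exact hcover
    exact aux_iso C hC μ hlsi S₂ S₁ S₃ h₂ h₃ h₁₂.symm h₂₃ h₁₃ hcover' hmin₀ hmin₁
end

section
/- Let π be a probability measure on ℝ^d satisfying a Poincaré inequality with constant C_PI > 0. Then π satisfies the generalized three-set isoperimetric inequality with F(t) = t and Υ(δ) = δ² / (16·(C_PI + 4δ²)): for every measurable partition ℝ^d = S₁ ⊔ S₂ ⊔ S₃ with 0 < min{π(S₁),π(S₂)} ≤ 1/2, one has π(S₃) ≥ Υ(d(S₁,S₂)) · min{π(S₁), π(S₂)}, where d(S₁,S₂) = inf{‖x−y‖ : x ∈ S₁, y ∈ S₂}. -/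
open MeasureTheory

/-- generalized three-set isoperimetric inequality under a Poincaré
inequality, with `F(t) = t` and `Υ(δ) = δ²/(16(C_PI + 4δ²))`.
Here `μ` plays the role of the target distribution π. -/
theorem three_set_isoperimetry_poincare {d : ℕ} (C : ℝ) (hC : 0 < C)
    (μ : Measure (EuclideanSpace ℝ (Fin d))) [IsProbabilityMeasure μ]
    -- Poincaré inequality with constant C for all locally Lipschitz functions
    (hpi : ∀ u : EuclideanSpace ℝ (Fin d) → ℝ, LocallyLipschitz u →
      ∫ x, (u x - ∫ y, u y ∂μ) ^ 2 ∂μ ≤ C * ∫ x, ‖gradient u x‖ ^ 2 ∂μ)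
    (S₁ S₂ S₃ : Set (EuclideanSpace ℝ (Fin d)))
    (h₁ : MeasurableSet S₁) (h₂ : MeasurableSet S₂) (h₃ : MeasurableSet S₃)
    (h₁₂ : Disjoint S₁ S₂) (h₁₃ : Disjoint S₁ S₃) (h₂₃ : Disjoint S₂ S₃)
    (hcover : S₁ ∪ S₂ ∪ S₃ = Set.univ)
    (hmin₀ : 0 < min (μ S₁).toReal (μ S₂).toReal)
    (hmin₁ : min (μ S₁).toReal (μ S₂).toReal ≤ 1/2) :
    (μ S₃).toReal ≥
      (setDist S₁ S₂) ^ 2 / (16 * (C + 4 * (setDist S₁ S₂) ^ 2)) *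
        min (μ S₁).toReal (μ S₂).toReal := by
  classical
  set δ : ℝ := setDist S₁ S₂ with hδ
  set M : ℝ := min (μ S₁).toReal (μ S₂).toReal with hM
  have hμ₁ : M ≤ (μ S₁).toReal := min_le_left _ _
  have hμ₂ : M ≤ (μ S₂).toReal := min_le_right _ _
  -- S₁, S₂ nonempty
  have hS₁ne : S₁.Nonempty := by
    rcases Set.eq_empty_or_nonempty S₁ with h | h
    · exfalso; rw [hM, h] at hmin₀; simp [lt_min_iff] at hmin₀
    · exact h
  have hS₂ne : S₂.Nonempty := by
    rcases Set.eq_empty_or_nonempty S₂ with h | h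
    · exfalso; rw [hM, h] at hmin₀; simp [lt_min_iff] at hmin₀
    · exact h
  have hbdd : BddBelow (Set.image2 dist S₁ S₂) :=
    ⟨0, fun x hx => by
      obtain ⟨a, _, b, _, rfl⟩ := hx
      exact dist_nonneg⟩
  have hδ0 : 0 ≤ δ := by
    apply le_csInf
    · exact ⟨dist hS₁ne.some hS₂ne.some, hS₁ne.some, hS₁ne.some_mem, hS₂ne.some,
        hS₂ne.some_mem, rfl⟩
    · rintro b ⟨a, _, c, _, rfl⟩; exact dist_nonneg
  have hδle : ∀ x ∈ S₁, ∀ y ∈ S₂, δ ≤ dist x y := by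
    intro x hx y hy
    exact csInf_le hbdd ⟨x, hx, y, hy, rfl⟩
  rcases eq_or_lt_of_le hδ0 with h0 | hδpos
  · rw [← h0]
    simp only [ne_eq, OfNat.ofNat_ne_zero, not_false_eq_true, zero_pow, zero_div, zero_mul,
      ge_iff_le]
    exact ENNReal.toReal_nonneg
  -- main case : δ > 0
  set g : EuclideanSpace ℝ (Fin d) → ℝ := fun x => min δ (Metric.infDist x S₁) with hg
  have hlip : LipschitzWith 1 g := (Metric.lipschitz_infDist_pt S₁).const_min δ
  have hg0 : ∀ x, 0 ≤ g x := fun x => le_min hδ0 Metric.infDist_nonneg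
  have hgle : ∀ x, g x ≤ δ := fun x => min_le_left _ _
  have hgS₁ : ∀ x ∈ S₁, g x = 0 := by
    intro x hx
    simp [hg, Metric.infDist_zero_of_mem hx, min_eq_right hδ0]
  have hgS₂ : ∀ x ∈ S₂, g x = δ := by
    intro x hx
    have hinf : δ ≤ Metric.infDist x S₁ := by
      by_contra hlt
      push_neg at hlt
      obtain ⟨y, hy, hxy⟩ := (Metric.infDist_lt_iff hS₁ne).mp hlt
      have := hδle y hy x hx
      rw [dist_comm] at this
      linarith
    simp [hg, min_eq_left hinf]
  -- gradient vanishes on S₁ ∪ S₂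
  have hgrad₁ : ∀ x ∈ S₁, gradient g x = 0 := by
    intro x hx
    by_cases hd : DifferentiableAt ℝ g x
    · have hmin : IsLocalMin g x := by
        apply IsMinOn.isLocalMin (s := Set.univ)
        · intro y _
          rw [Set.mem_setOf_eq, hgS₁ x hx]
          exact hg0 y
        · exact Filter.univ_mem
      have : fderiv ℝ g x = 0 := hmin.fderiv_eq_zero
      simp [gradient, this]
    · exact gradient_eq_zero_of_not_differentiableAt hd
  have hgrad₂ : ∀ x ∈ S₂, gradient g x = 0 := by
    intro x hx
    by_cases hd : DifferentiableAt ℝ g x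
    · have hmax : IsLocalMax g x := by
        apply IsMaxOn.isLocalMax (s := Set.univ)
        · intro y _
          rw [Set.mem_setOf_eq, hgS₂ x hx]
          exact hgle y
        · exact Filter.univ_mem
      have : fderiv ℝ g x = 0 := hmax.fderiv_eq_zero
      simp [gradient, this]
    · exact gradient_eq_zero_of_not_differentiableAt hd
  have hgradle : ∀ x, ‖gradient g x‖ ≤ 1 := by
    intro x
    have h1 : ‖fderiv ℝ g x‖ ≤ ((1 : NNReal) : ℝ) := norm_fderiv_le_of_lipschitz ℝ hlip
    have h2 : ‖gradient g x‖ = ‖fderiv ℝ g x‖ := by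
      rw [gradient]
      exact (InnerProductSpace.toDual ℝ (EuclideanSpace ℝ (Fin d))).symm.norm_map _
    rw [h2]
    simpa using h1
  set m : ℝ := ∫ y, g y ∂μ with hm
  -- integrability of (g - m)^2
  have hgcont : Continuous g := hlip.continuous
  have hsqint : Integrable (fun x => (g x - m) ^ 2) μ := by
    apply Integrable.mono' (integrable_const ((δ + |m|) ^ 2))
    · exact ((hgcont.sub continuous_const).pow 2).aestronglyMeasurable
    · filter_upwards with x
      rw [Real.norm_eq_abs, abs_of_nonneg (sq_nonneg _)]
      have h1 : |g x - m| ≤ δ + |m| := by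
        have := abs_sub_abs_le_abs_sub (g x) m
        have h2 : |g x| ≤ δ := by rw [abs_of_nonneg (hg0 x)]; exact hgle x
        calc |g x - m| ≤ |g x| + |m| := abs_sub _ _
          _ ≤ δ + |m| := by linarith
      calc (g x - m) ^ 2 = |g x - m| ^ 2 := (sq_abs _).symm
        _ ≤ (δ + |m|) ^ 2 := by
            apply pow_le_pow_left₀ (abs_nonneg _) h1
  -- lower bound on the variance
  have hlower : δ ^ 2 / 2 * M ≤ ∫ x, (g x - m) ^ 2 ∂μ := by
    set φ : EuclideanSpace ℝ (Fin d) → ℝ := fun x =>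
      Set.indicator S₁ (fun _ => m ^ 2) x + Set.indicator S₂ (fun _ => (δ - m) ^ 2) x with hφ
    have hφle : ∀ x, φ x ≤ (g x - m) ^ 2 := by
      intro x
      by_cases hx1 : x ∈ S₁
      · have hx2 : x ∉ S₂ := fun h => h₁₂.le_bot ⟨hx1, h⟩
        simp [hφ, Set.indicator_of_mem hx1, Set.indicator_of_notMem hx2, hgS₁ x hx1]
        try ring_nf
        try rfl
      · by_cases hx2 : x ∈ S₂
        · simp [hφ, Set.indicator_of_notMem hx1, Set.indicator_of_mem hx2, hgS₂ x hx2]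
        · simp [hφ, Set.indicator_of_notMem hx1, Set.indicator_of_notMem hx2]
          exact sq_nonneg _
    have hφint : Integrable φ μ :=
      ((integrable_const _).indicator h₁).add ((integrable_const _).indicator h₂)
    have hint : ∫ x, φ x ∂μ = m ^ 2 * (μ S₁).toReal + (δ - m) ^ 2 * (μ S₂).toReal := by
      rw [hφ]
      rw [integral_add ((integrable_const _).indicator h₁) ((integrable_const _).indicator h₂)]
      rw [integral_indicator_const _ h₁, integral_indicator_const _ h₂]
      simp [smul_eq_mul]
      simp only [measureReal_def]
      ring
    have hmono : ∫ x, φ x ∂μ ≤ ∫ x, (g x - m) ^ 2 ∂μ := by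
      apply integral_mono hφint hsqint
      intro x
      exact hφle x
    rw [hint] at hmono
    have hμ₁0 : (0:ℝ) ≤ (μ S₁).toReal := ENNReal.toReal_nonneg
    have hμ₂0 : (0:ℝ) ≤ (μ S₂).toReal := ENNReal.toReal_nonneg
    nlinarith [sq_nonneg (2 * m - δ), sq_nonneg m, sq_nonneg (δ - m), hmin₀,
      mul_le_mul_of_nonneg_left hμ₁ (sq_nonneg m),
      mul_le_mul_of_nonneg_left hμ₂ (sq_nonneg (δ - m)),
      mul_pos hmin₀ hmin₀]
  -- upper bound on the energy
  have hupper : ∫ x, ‖gradient g x‖ ^ 2 ∂μ ≤ (μ S₃).toReal := by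
    have hble : ∀ x, ‖gradient g x‖ ^ 2 ≤ Set.indicator S₃ (fun _ => (1:ℝ)) x := by
      intro x
      have hx : x ∈ S₁ ∪ S₂ ∪ S₃ := by rw [hcover]; trivial
      rcases hx with hx | hx
      · rcases hx with hx | hx
        · rw [hgrad₁ x hx]
          have hx3 : x ∉ S₃ := fun h => h₁₃.le_bot ⟨hx, h⟩
          simp [Set.indicator_of_notMem hx3]
        · rw [hgrad₂ x hx]
          have hx3 : x ∉ S₃ := fun h => h₂₃.le_bot ⟨hx, h⟩
          simp [Set.indicator_of_notMem hx3]
      · rw [Set.indicator_of_mem hx]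
        have := hgradle x
        nlinarith [norm_nonneg (gradient g x)]
    have hind : Integrable (Set.indicator S₃ (fun _ => (1:ℝ))) μ :=
      (integrable_const _).indicator h₃
    have := integral_mono_of_nonneg
      (Filter.Eventually.of_forall (fun x => by positivity))
      hind (Filter.Eventually.of_forall hble)
    rwa [integral_indicator_const _ h₃, smul_eq_mul, mul_one] at this
  -- combine
  have hkey := hpi g hlip.locallyLipschitz
  have hchain : δ ^ 2 / 2 * M ≤ C * (μ S₃).toReal := by
    calc δ ^ 2 / 2 * M ≤ ∫ x, (g x - m) ^ 2 ∂μ := hlower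
      _ ≤ C * ∫ x, ‖gradient g x‖ ^ 2 ∂μ := hkey
      _ ≤ C * (μ S₃).toReal := by
          apply mul_le_mul_of_nonneg_left hupper hC.le
  -- final algebra
  have hden : (0:ℝ) < 16 * (C + 4 * δ ^ 2) := by nlinarith
  rw [ge_iff_le, div_mul_eq_mul_div, div_le_iff₀ hden]
  have hμ₃0 : (0:ℝ) ≤ (μ S₃).toReal := ENNReal.toReal_nonneg
  nlinarith [mul_nonneg (mul_nonneg hμ₃0 (sq_nonneg δ)) (le_of_lt hδpos), hchain,
    mul_nonneg hμ₃0 (sq_nonneg δ), mul_nonneg hμ₃0 hC.le]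
end

section
/- Let π be a probability measure on ℝ^d with positive density, Q a proposal kernel with symmetric density q(x,y) = q(y,x) (jointly measurable, with Q(x,·) having density q(x,·) with respect to Lebesgue measure), and P the associated Metropolis kernel: P(x, A) = ∫_A α(x,y) q(x,y) dy + r(x)·1_A(x), where α(x,y) = min{1, π(y)/π(x)} and r(x) = 1 − ∫ α(x,y) q(x,y) dy. Then for all x, y ∈ ℝ^d, TV(P(x,·), P(y,·)) ≤ TV(Q(x,·), Q(y,·)) + sup_z r(z). -/
open MeasureTheory

/-- for a Metropolis kernel built from a symmetric proposal density `q`,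
`TV(P(x,·),P(y,·)) ≤ TV(Q(x,·),Q(y,·)) + sup_z r(z)`.  Here `μ` plays the role of the
target distribution π with positive density `p`. -/
theorem metropolis_close_coupling_symmetric {d : ℕ}
    (p : EuclideanSpace ℝ (Fin d) → ℝ) (hp_meas : Measurable p) (hp_pos : ∀ x, 0 < p x)
    (μ : Measure (EuclideanSpace ℝ (Fin d)))
    (hμ : μ = volume.withDensity fun x => ENNReal.ofReal (p x))
    [IsProbabilityMeasure μ]
    (q : EuclideanSpace ℝ (Fin d) → EuclideanSpace ℝ (Fin d) → ℝ)
    (hq_meas : Measurable (Function.uncurry q))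
    (hq_nonneg : ∀ x y, 0 ≤ q x y)
    (hq_sym : ∀ x y, q x y = q y x)
    (Q : EuclideanSpace ℝ (Fin d) → Measure (EuclideanSpace ℝ (Fin d)))
    (hQ : ∀ x, Q x = volume.withDensity fun y => ENNReal.ofReal (q x y))
    (hQ_prob : ∀ x, IsProbabilityMeasure (Q x))
    (P : EuclideanSpace ℝ (Fin d) → Measure (EuclideanSpace ℝ (Fin d)))
    (hP : ∀ x, P x =
      (volume.withDensity fun y => ENNReal.ofReal (min 1 (p y / p x) * q x y))
      + (ENNReal.ofReal (1 - ∫ y, min 1 (p y / p x) * q x y)) • Measure.dirac x)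
    (x y : EuclideanSpace ℝ (Fin d)) :
    tvDist (P x) (P y) ≤
      tvDist (Q x) (Q y) + ⨆ z, (1 - ∫ y', min 1 (p y' / p z) * q z y') := by
  classical
  have hqm : ∀ a, Measurable (q a) := fun a => hq_meas.comp measurable_prodMk_left
  have hα0 : ∀ a z : EuclideanSpace ℝ (Fin d), 0 ≤ min 1 (p z / p a) :=
    fun a z => le_min zero_le_one (div_nonneg (hp_pos z).le (hp_pos a).le)
  have hα1 : ∀ a z : EuclideanSpace ℝ (Fin d), min 1 (p z / p a) ≤ 1 :=
    fun a z => min_le_left _ _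
  have lint_q : ∀ a, ∫⁻ z, ENNReal.ofReal (q a z) = 1 := by
    intro a
    have h1 : (Q a) Set.univ = 1 := (hQ_prob a).measure_univ
    rwa [hQ a, withDensity_apply _ MeasurableSet.univ, setLIntegral_univ] at h1
  have hq_int : ∀ a, Integrable (q a) := by
    intro a
    refine ⟨(hqm a).aestronglyMeasurable, ?_⟩
    rw [hasFiniteIntegral_iff_ofReal (ae_of_all _ (hq_nonneg a)), lint_q a]
    exact ENNReal.one_lt_top
  have hq_intgl : ∀ a, ∫ z, q a z = 1 := by
    intro a
    rw [integral_eq_lintegral_of_nonneg_ae (ae_of_all _ (hq_nonneg a))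
      (hqm a).aestronglyMeasurable, lint_q a, ENNReal.toReal_one]
  have int_dom : ∀ (h : EuclideanSpace ℝ (Fin d) → ℝ) (a : EuclideanSpace ℝ (Fin d)),
      Measurable h → (∀ z, 0 ≤ h z) → (∀ z, h z ≤ q a z) → Integrable h := by
    intro h a hm h0 hle
    refine (hq_int a).mono' hm.aestronglyMeasurable (ae_of_all _ fun z => ?_)
    rw [Real.norm_eq_abs, abs_of_nonneg (h0 z)]; exact hle z
  have hfm : ∀ a, Measurable (fun z => min 1 (p z / p a) * q a z) :=
    fun a => (measurable_const.min (hp_meas.div_const _)).mul (hqm a)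
  have hf0 : ∀ a z, 0 ≤ min 1 (p z / p a) * q a z :=
    fun a z => mul_nonneg (hα0 a z) (hq_nonneg a z)
  have hfle : ∀ a z, min 1 (p z / p a) * q a z ≤ q a z := by
    intro a z
    calc min 1 (p z / p a) * q a z ≤ 1 * q a z :=
          mul_le_mul_of_nonneg_right (hα1 a z) (hq_nonneg a z)
      _ = q a z := one_mul _
  have hf_int : ∀ a, Integrable (fun z => min 1 (p z / p a) * q a z) :=
    fun a => int_dom _ a (hfm a) (hf0 a) (hfle a)
  have hI0 : ∀ a, 0 ≤ ∫ z, min 1 (p z / p a) * q a z :=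
    fun a => integral_nonneg (hf0 a)
  have hI1 : ∀ a, ∫ z, min 1 (p z / p a) * q a z ≤ 1 := by
    intro a
    have h := integral_mono (hf_int a) (hq_int a) (hfle a)
    rwa [hq_intgl a] at h
  have hQA : ∀ a (A : Set (EuclideanSpace ℝ (Fin d))), MeasurableSet A →
      ((Q a) A).toReal = ∫ z in A, q a z := by
    intro a A hA
    rw [hQ a, withDensity_apply _ hA,
      ← ofReal_integral_eq_lintegral_ofReal ((hq_int a).restrict)
        (ae_of_all _ (hq_nonneg a)),
      ENNReal.toReal_ofReal (integral_nonneg (fun z => hq_nonneg a z))]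
  have hPA : ∀ a (A : Set (EuclideanSpace ℝ (Fin d))), MeasurableSet A →
      ((P a) A).toReal = (∫ z in A, min 1 (p z / p a) * q a z)
        + (1 - ∫ z, min 1 (p z / p a) * q a z) * (if a ∈ A then 1 else 0) := by
    intro a A hA
    rw [hP a, Measure.add_apply, Measure.smul_apply, smul_eq_mul]
    have h1 : (volume.withDensity fun z => ENNReal.ofReal (min 1 (p z / p a) * q a z)) A
        = ENNReal.ofReal (∫ z in A, min 1 (p z / p a) * q a z) := by
      rw [withDensity_apply _ hA,
        ← ofReal_integral_eq_lintegral_ofReal ((hf_int a).restrict) (ae_of_all _ (hf0 a))]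
    have h2 : (Measure.dirac a) A = if a ∈ A then 1 else 0 := by
      rw [Measure.dirac_apply' a hA]
      by_cases h : a ∈ A <;> simp [h]
    rw [h1, h2, ENNReal.toReal_add ENNReal.ofReal_ne_top
      (ENNReal.mul_ne_top ENNReal.ofReal_ne_top (by split <;> simp))]
    rw [ENNReal.toReal_ofReal (integral_nonneg (fun z => hf0 a z))]
    congr 1
    rw [ENNReal.toReal_mul, ENNReal.toReal_ofReal (by linarith [hI1 a])]
    congr 1
    by_cases h : a ∈ A <;> simp [h]
  -- boundedness of suprema
  have hbdd_r : BddAbove (Set.range fun z => 1 - ∫ y', min 1 (p y' / p z) * q z y') := by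
    refine ⟨1, ?_⟩
    rintro t ⟨z, rfl⟩
    have := hI0 z
    simp only []
    linarith
  have hQle1 : ∀ a (A : Set (EuclideanSpace ℝ (Fin d))), ((Q a) A).toReal ≤ 1 := by
    intro a A
    have h1 : ((Q a) A).toReal ≤ ((Q a) Set.univ).toReal := by
      have := hQ_prob a
      exact ENNReal.toReal_mono (measure_ne_top _ _) (measure_mono (Set.subset_univ A))
    rwa [(hQ_prob a).measure_univ, ENNReal.toReal_one] at h1
  have hbddQ : ∀ a b, BddAbove (Set.range fun A :
      {A : Set (EuclideanSpace ℝ (Fin d)) // MeasurableSet A} =>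
      |((Q a) A.1).toReal - ((Q b) A.1).toReal|) := by
    intro a b
    refine ⟨2, ?_⟩
    rintro t ⟨A, rfl⟩
    have h1 := hQle1 a A.1
    have h2 := hQle1 b A.1
    have h3 : 0 ≤ ((Q a) A.1).toReal := ENNReal.toReal_nonneg
    have h4 : 0 ≤ ((Q b) A.1).toReal := ENNReal.toReal_nonneg
    rw [abs_sub_le_iff]
    constructor <;> linarith
  -- the key one-sided estimate
  have key : ∀ a b : EuclideanSpace ℝ (Fin d), ∀ A : Set (EuclideanSpace ℝ (Fin d)),
      MeasurableSet A →
      ((P a) A).toReal - ((P b) A).toReal ≤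
        tvDist (Q a) (Q b) + ⨆ z, (1 - ∫ y', min 1 (p y' / p z) * q z y') := by
    intro a b A hA
    have hmin_int : Integrable (fun z => min (min 1 (p z / p a) * q a z)
        (min 1 (p z / p b) * q b z)) :=
      int_dom _ a ((hfm a).min (hfm b)) (fun z => le_min (hf0 a z) (hf0 b z))
        (fun z => le_trans (min_le_left _ _) (hfle a z))
    have hminq_int : Integrable (fun z => min (q a z) (q b z)) :=
      int_dom _ a ((hqm a).min (hqm b)) (fun z => le_min (hq_nonneg a z) (hq_nonneg b z))
        (fun z => min_le_left _ _)
    -- step 1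
    have step1 : ((P a) A).toReal - ((P b) A).toReal
        ≤ 1 - ∫ z, min (min 1 (p z / p a) * q a z) (min 1 (p z / p b) * q b z) := by
      rw [hPA a A hA, hPA b A hA]
      have h1 : (1 - ∫ z, min 1 (p z / p a) * q a z) * (if a ∈ A then 1 else 0)
          ≤ 1 - ∫ z, min 1 (p z / p a) * q a z := by
        have := hI1 a; split <;> nlinarith
      have h2 : 0 ≤ (1 - ∫ z, min 1 (p z / p b) * q b z) * (if b ∈ A then 1 else 0) := by
        have := hI1 b; split <;> nlinarith
      have h3 : (∫ z in A, min 1 (p z / p a) * q a z) - ∫ z in A, min 1 (p z / p b) * q b z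
          ≤ ∫ z, (min 1 (p z / p a) * q a z
              - min (min 1 (p z / p a) * q a z) (min 1 (p z / p b) * q b z)) := by
        rw [← integral_sub ((hf_int a).restrict) ((hf_int b).restrict)]
        calc (∫ z in A, (min 1 (p z / p a) * q a z - min 1 (p z / p b) * q b z))
            ≤ ∫ z in A, (min 1 (p z / p a) * q a z
                - min (min 1 (p z / p a) * q a z) (min 1 (p z / p b) * q b z)) := by
              refine integral_mono (((hf_int a).restrict).sub ((hf_int b).restrict))
                (((hf_int a).restrict).sub (hmin_int.restrict)) (fun z => ?_)
              exact sub_le_sub_left (min_le_right _ _) _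
          _ ≤ ∫ z, (min 1 (p z / p a) * q a z
                - min (min 1 (p z / p a) * q a z) (min 1 (p z / p b) * q b z)) :=
              setIntegral_le_integral ((hf_int a).sub hmin_int)
                (ae_of_all _ fun z => sub_nonneg.2 (min_le_left _ _))
      have h4 : ∫ z, (min 1 (p z / p a) * q a z
            - min (min 1 (p z / p a) * q a z) (min 1 (p z / p b) * q b z))
          = (∫ z, min 1 (p z / p a) * q a z)
            - ∫ z, min (min 1 (p z / p a) * q a z) (min 1 (p z / p b) * q b z) :=
        integral_sub (hf_int a) hmin_int
      linarith
    -- step 2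
    have hS : MeasurableSet {z | q b z ≤ q a z} := measurableSet_le (hqm b) (hqm a)
    have step2 : 1 - ∫ z, min (q a z) (q b z) ≤ tvDist (Q a) (Q b) := by
      have hsplit : ∫ z, min (q a z) (q b z)
          = (∫ z in {z | q b z ≤ q a z}, min (q a z) (q b z))
            + ∫ z in {z | q b z ≤ q a z}ᶜ, min (q a z) (q b z) :=
        (integral_add_compl hS hminq_int).symm
      have e1 : ∫ z in {z | q b z ≤ q a z}, min (q a z) (q b z)
          = ∫ z in {z | q b z ≤ q a z}, q b z := by
        refine setIntegral_congr_fun hS (fun z hz => ?_)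
        exact min_eq_right hz
      have e2 : ∫ z in {z | q b z ≤ q a z}ᶜ, min (q a z) (q b z)
          = ∫ z in {z | q b z ≤ q a z}ᶜ, q a z := by
        refine setIntegral_congr_fun hS.compl (fun z hz => ?_)
        exact min_eq_left (le_of_lt (lt_of_not_ge hz))
      have hsplit_qa : ∫ z, q a z = (∫ z in {z | q b z ≤ q a z}, q a z)
            + ∫ z in {z | q b z ≤ q a z}ᶜ, q a z :=
        (integral_add_compl hS (hq_int a)).symm
      have hle_tv : ((Q a) {z | q b z ≤ q a z}).toReal
          - ((Q b) {z | q b z ≤ q a z}).toReal ≤ tvDist (Q a) (Q b) :=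
        le_trans (le_abs_self _) (le_ciSup (hbddQ a b) ⟨_, hS⟩)
      rw [hQA a _ hS, hQA b _ hS] at hle_tv
      have hqa1 := hq_intgl a
      linarith
    -- step 3
    have step3 : (∫ z, min (q a z) (q b z))
          - ∫ z, min (min 1 (p z / p a) * q a z) (min 1 (p z / p b) * q b z)
        ≤ ⨆ z, (1 - ∫ y', min 1 (p y' / p z) * q z y') := by
      obtain ⟨M, hMa, hMb, hM⟩ : ∃ M, p a ≤ p M ∧ p b ≤ p M ∧ (M = a ∨ M = b) := by
        rcases le_total (p a) (p b) with h | h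
        · exact ⟨b, h, le_refl _, Or.inr rfl⟩
        · exact ⟨a, le_refl _, h, Or.inl rfl⟩
      have hpt : ∀ z, min (q a z) (q b z)
            - min (min 1 (p z / p a) * q a z) (min 1 (p z / p b) * q b z)
          ≤ q M z - min 1 (p z / p M) * q M z := by
        intro z
        have hw0 : 0 ≤ min 1 (p z / p M) := hα0 M z
        have hw1 : min 1 (p z / p M) ≤ 1 := hα1 M z
        have hmq0 : 0 ≤ min (q a z) (q b z) := le_min (hq_nonneg a z) (hq_nonneg b z)
        have hwa : min 1 (p z / p M) ≤ min 1 (p z / p a) :=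
          min_le_min (le_refl _) (div_le_div_of_nonneg_left (hp_pos z).le (hp_pos a) hMa)
        have hwb : min 1 (p z / p M) ≤ min 1 (p z / p b) :=
          min_le_min (le_refl _) (div_le_div_of_nonneg_left (hp_pos z).le (hp_pos b) hMb)
        have hlow : min 1 (p z / p M) * min (q a z) (q b z)
            ≤ min (min 1 (p z / p a) * q a z) (min 1 (p z / p b) * q b z) := by
          refine le_min ?_ ?_
          · exact mul_le_mul hwa (min_le_left _ _) hmq0 (hα0 a z)
          · exact mul_le_mul hwb (min_le_right _ _) hmq0 (hα0 b z)
        have hqM : min (q a z) (q b z) ≤ q M z := by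
          rcases hM with rfl | rfl
          · exact min_le_left _ _
          · exact min_le_right _ _
        nlinarith [mul_le_mul_of_nonneg_left hqM (sub_nonneg.2 hw1)]
      have hsub : ∫ z, (min (q a z) (q b z)
            - min (min 1 (p z / p a) * q a z) (min 1 (p z / p b) * q b z))
          ≤ ∫ z, (q M z - min 1 (p z / p M) * q M z) :=
        integral_mono (hminq_int.sub hmin_int) ((hq_int M).sub (hf_int M)) hpt
      rw [integral_sub hminq_int hmin_int, integral_sub (hq_int M) (hf_int M)] at hsub
      have hle : (1 : ℝ) - ∫ y', min 1 (p y' / p M) * q M y'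
          ≤ ⨆ z, (1 - ∫ y', min 1 (p y' / p z) * q z y') := le_ciSup hbdd_r M
      have hqM1 := hq_intgl M
      linarith
    linarith
  -- conclude
  have htv_symm : tvDist (Q y) (Q x) = tvDist (Q x) (Q y) := by
    unfold tvDist
    congr 1
    funext A
    rw [abs_sub_comm]
  haveI : Nonempty {A : Set (EuclideanSpace ℝ (Fin d)) // MeasurableSet A} :=
    ⟨⟨∅, MeasurableSet.empty⟩⟩
  have hdef : tvDist (P x) (P y)
      = ⨆ A : {A : Set (EuclideanSpace ℝ (Fin d)) // MeasurableSet A},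
        |((P x) A.1).toReal - ((P y) A.1).toReal| := rfl
  rw [hdef]
  refine ciSup_le ?_
  rintro ⟨A, hA⟩
  rw [abs_sub_le_iff]
  refine ⟨key x y A hA, ?_⟩
  have h := key y x A hA
  rwa [htv_symm] at h
end

section
/- Let π be a probability measure on ℝ^d with positive density satisfying the smoothness decomposition assumption with constants M, L, and let h > 0. Then the Random–Walk Metropolis rejection rate satisfies, for every x ∈ ℝ^d, r(x) = 1 − E_{ξ∼N(0,I_d)}[ min{1, π(x + hξ)/π(x)} ] ≤ 1/2 + L·h·√d + (1/4)·M·h²·d. -/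
open MeasureTheory

/-- Density at `y` of the Gaussian distribution on `ℝ^d` with mean `m` and
covariance `s·I_d` (`s` is the common variance of the coordinates). -/
noncomputable def gaussDensity (d : ℕ) (m : EuclideanSpace ℝ (Fin d)) (s : ℝ)
    (y : EuclideanSpace ℝ (Fin d)) : ℝ :=
  (2 * Real.pi * s) ^ (-(d : ℝ) / 2) * Real.exp (-‖y - m‖ ^ 2 / (2 * s))

/-- The Gaussian measure on `ℝ^d` with mean `m` and covariance `s·I_d`,
defined via its Lebesgue density. -/
noncomputable def gaussMeasure (d : ℕ) (m : EuclideanSpace ℝ (Fin d)) (s : ℝ) :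
    Measure (EuclideanSpace ℝ (Fin d)) :=
  volume.withDensity fun y => ENNReal.ofReal (gaussDensity d m s y)

open Real
open scoped RealInnerProductSpace

namespace RWMAux


lemma one_sub_min_nonneg (t : ℝ) : 0 ≤ 1 - min 1 (Real.exp t) :=
  sub_nonneg.2 (min_le_left _ _)

lemma one_sub_min_le_one (t : ℝ) : 1 - min 1 (Real.exp t) ≤ 1 := by
  have : (0:ℝ) ≤ min 1 (Real.exp t) := le_min one_pos.le (Real.exp_nonneg t)
  linarith

lemma one_sub_min_le_neg {t : ℝ} (ht : t ≤ 0) : 1 - min 1 (Real.exp t) ≤ -t := by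
  have h1 : t + 1 ≤ Real.exp t := Real.add_one_le_exp t
  have h2 : min 1 (t+1) ≤ min 1 (Real.exp t) := min_le_min le_rfl h1
  have : min (1:ℝ) (t+1) = t + 1 := min_eq_right (by linarith)
  rw [this] at h2; linarith

lemma one_sub_min_eq_zero {t : ℝ} (ht : 0 ≤ t) : 1 - min 1 (Real.exp t) = 0 := by
  rw [min_eq_left (Real.one_le_exp ht)]; ring

lemma antitone_one_sub_min {s t : ℝ} (hst : s ≤ t) :
    1 - min 1 (Real.exp t) ≤ 1 - min 1 (Real.exp s) := by
  have := min_le_min (le_refl (1:ℝ)) (Real.exp_le_exp.2 hst)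
  linarith

lemma key_scalar {A b D1 D2 : ℝ} (hb : 0 ≤ b) (h1 : A - b ≤ D1) (h2 : -A - b ≤ D2) :
    (1 - min 1 (Real.exp D1)) + (1 - min 1 (Real.exp D2)) ≤ 1 + b := by
  rcases le_total (1:ℝ) b with hb1 | hb1
  · have := one_sub_min_le_one D1; have := one_sub_min_le_one D2; linarith
  rcases le_total b A with hA | hA
  · have e1 : 1 - min 1 (Real.exp D1) ≤ 0 := by
      have := antitone_one_sub_min h1
      rw [one_sub_min_eq_zero (by linarith : (0:ℝ) ≤ A - b)] at this
      exact this
    have := one_sub_min_le_one D2; linarith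
  rcases le_total A (-b) with hA' | hA'
  · have e2 : 1 - min 1 (Real.exp D2) ≤ 0 := by
      have := antitone_one_sub_min h2
      rw [one_sub_min_eq_zero (by linarith : (0:ℝ) ≤ -A - b)] at this
      exact this
    have := one_sub_min_le_one D1; linarith
  · have e1 : 1 - min 1 (Real.exp D1) ≤ b - A := by
      have := antitone_one_sub_min h1
      have := one_sub_min_le_neg (show A - b ≤ 0 by linarith); linarith
    have e2 : 1 - min 1 (Real.exp D2) ≤ b + A := by
      have := antitone_one_sub_min h2
      have := one_sub_min_le_neg (show -A - b ≤ 0 by linarith); linarith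
    linarith



lemma taylor_quadratic {d : ℕ} {M : ℝ} (hM : 0 ≤ M)
    {f : EuclideanSpace ℝ (Fin d) → ℝ} {f' : EuclideanSpace ℝ (Fin d) → EuclideanSpace ℝ (Fin d)}
    (hf : ∀ x, HasGradientAt f (f' x) x)
    (hf' : ∀ x y, ‖f' x - f' y‖ ≤ M * ‖x - y‖)
    (u v : EuclideanSpace ℝ (Fin d)) :
    |f v - f u - ⟪f' u, v - u⟫| ≤ M / 2 * ‖v - u‖ ^ 2 := by
  set w := v - u with hw
  have hc : ∀ t : ℝ, HasDerivAt (fun t : ℝ => u + t • w) w t := fun t => by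
    simpa using ((hasDerivAt_id t).smul_const w).const_add u
  have hF : ∀ t : ℝ, HasDerivAt (fun t : ℝ => f (u + t • w)) ⟪f' (u + t • w), w⟫ t := by
    intro t
    have h1 := ((hf (u + t • w)).hasFDerivAt).comp_hasDerivAt t (hc t)
    simpa [InnerProductSpace.toDual_apply_apply, Function.comp_def] using h1
  have hf'cont : Continuous f' := by
    have hlip : LipschitzWith (Real.toNNReal M) f' := by
      apply LipschitzWith.of_dist_le_mul
      intro a b
      rw [dist_eq_norm, dist_eq_norm, Real.coe_toNNReal M hM]
      exact hf' a b
    exact hlip.continuous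
  have hcont : Continuous fun t : ℝ => ⟪f' (u + t • w), w⟫ := by
    exact Continuous.inner (hf'cont.comp (by continuity)) continuous_const
  have hFTC : f v - f u = ∫ t in (0:ℝ)..1, ⟪f' (u + t • w), w⟫ := by
    have := intervalIntegral.integral_eq_sub_of_hasDerivAt
      (f := fun t : ℝ => f (u + t • w)) (f' := fun t : ℝ => ⟪f' (u + t • w), w⟫)
      (fun t _ => hF t) (hcont.intervalIntegrable 0 1)
    rw [this]
    norm_num [hw]
  have heq : f v - f u - ⟪f' u, w⟫
      = ∫ t in (0:ℝ)..1, (⟪f' (u + t • w), w⟫ - ⟪f' u, w⟫) := by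
    rw [intervalIntegral.integral_sub (hcont.intervalIntegrable 0 1)
      (intervalIntegrable_const), intervalIntegral.integral_const, ← hFTC]
    simp
  have hgcont : Continuous fun t : ℝ => M * ‖w‖ ^ 2 * (abs t) := by continuity
  have hbd : ‖∫ t in (0:ℝ)..1, (⟪f' (u + t • w), w⟫ - ⟪f' u, w⟫)‖
      ≤ |∫ t in (0:ℝ)..1, M * ‖w‖ ^ 2 * (abs t)| := by
    apply intervalIntegral.norm_integral_le_abs_of_norm_le _ (hgcont.intervalIntegrable 0 1)
    filter_upwards with t
    rw [← inner_sub_left]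
    calc ‖⟪f' (u + t • w) - f' u, w⟫‖ ≤ ‖f' (u + t • w) - f' u‖ * ‖w‖ := by
          rw [Real.norm_eq_abs]; exact abs_real_inner_le_norm _ _
      _ ≤ (M * ‖(u + t • w) - u‖) * ‖w‖ :=
          mul_le_mul_of_nonneg_right (hf' _ _) (norm_nonneg w)
      _ = M * ‖w‖ ^ 2 * (abs t) := by
          rw [add_sub_cancel_left, norm_smul, Real.norm_eq_abs]; ring
  have hIval : (∫ t in (0:ℝ)..1, M * ‖w‖ ^ 2 * (abs t)) = M * ‖w‖ ^ 2 * (1/2) := by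
    rw [intervalIntegral.integral_const_mul]
    have : (∫ t in (0:ℝ)..1, abs t) = 1/2 := by
      rw [intervalIntegral.integral_congr (g := fun t : ℝ => t)
        (fun t ht => by
          rw [Set.uIcc_of_le (by norm_num : (0:ℝ) ≤ 1)] at ht
          exact abs_of_nonneg ht.1)]
      rw [integral_id]; norm_num
    rw [this]
  rw [Real.norm_eq_abs] at hbd
  rw [hIval] at hbd
  have : |M * ‖w‖ ^ 2 * (1/2)| = M * ‖w‖ ^ 2 * (1/2) := abs_of_nonneg (by positivity)
  rw [this] at hbd
  calc |f v - f u - ⟪f' u, w⟫| ≤ M * ‖w‖ ^ 2 * (1/2) := by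
        rw [heq, ← Real.norm_eq_abs]; exact hbd
    _ = M / 2 * ‖w‖ ^ 2 := by ring


noncomputable def g1 : ℝ → ℝ := fun t => (2 * Real.pi) ^ (-(1:ℝ)/2) * Real.exp (-t ^ 2 / 2)

lemma g1_eq : g1 = fun t : ℝ => (2 * Real.pi) ^ (-(1:ℝ)/2) * Real.exp (-(1/2 : ℝ) * t ^ 2) := by
  funext t; unfold g1; ring_nf

lemma g1_nonneg (t : ℝ) : 0 ≤ g1 t := by
  unfold g1; positivity

lemma integrable_g1 : Integrable g1 := by
  rw [g1_eq]
  exact (integrable_exp_neg_mul_sq (by norm_num : (0:ℝ) < 1/2)).const_mul _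

lemma sqrt_two_pi_mul : ((2 * Real.pi) ^ (-(1:ℝ)/2)) * Real.sqrt (2 * Real.pi) = 1 := by
  rw [Real.sqrt_eq_rpow, ← Real.rpow_add (by positivity)]
  rw [show (-(1:ℝ)/2 + 1/2) = 0 by norm_num, Real.rpow_zero]

lemma integral_g1 : ∫ t, g1 t = 1 := by
  rw [g1_eq, MeasureTheory.integral_const_mul, integral_gaussian]
  have : Real.sqrt (π / (1/2)) = Real.sqrt (2 * π) := by norm_num [mul_comm]
  rw [this, sqrt_two_pi_mul]

lemma integrable_sq_exp : Integrable (fun t : ℝ => t ^ 2 * Real.exp (-(1/2 : ℝ) * t ^ 2)) := by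
  have := integrable_rpow_mul_exp_neg_mul_sq (by norm_num : (0:ℝ) < 1/2) (by norm_num : (-1:ℝ) < 2)
  refine this.congr ?_
  filter_upwards with t
  norm_num [Real.rpow_natCast t 2]

lemma integral_sq_exp : ∫ t : ℝ, t ^ 2 * Real.exp (-(1/2 : ℝ) * t ^ 2)
    = ∫ t : ℝ, Real.exp (-(1/2 : ℝ) * t ^ 2) := by
  have hexp : Integrable (fun t : ℝ => Real.exp (-(1/2 : ℝ) * t ^ 2)) :=
    integrable_exp_neg_mul_sq (by norm_num)
  -- FTC on the whole line with F t = -t * exp(-t^2/2)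
  have hderiv : ∀ t : ℝ, HasDerivAt (fun t : ℝ => -t * Real.exp (-(1/2 : ℝ) * t ^ 2))
      ((t ^ 2 - 1) * Real.exp (-(1/2 : ℝ) * t ^ 2)) t := by
    intro t
    have h1 : HasDerivAt (fun t : ℝ => -(1/2 : ℝ) * t ^ 2) (-(1/2 : ℝ) * (2 * t)) t := by
      simpa using (((hasDerivAt_pow 2 t)).const_mul (-(1/2 : ℝ)))
    have h2 : HasDerivAt (fun t : ℝ => Real.exp (-(1/2 : ℝ) * t ^ 2))
        (Real.exp (-(1/2 : ℝ) * t ^ 2) * (-(1/2 : ℝ) * (2 * t))) t := h1.exp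
    have h3 : HasDerivAt (fun t : ℝ => -t) (-1) t := (hasDerivAt_id t).neg
    have := h3.mul h2
    rw [show (t ^ 2 - 1) * Real.exp (-(1/2 : ℝ) * t ^ 2) = -1 * Real.exp (-(1/2 : ℝ) * t ^ 2)
      + -t * (Real.exp (-(1/2 : ℝ) * t ^ 2) * (-(1/2 : ℝ) * (2 * t))) by ring]
    exact this
  have hint : Integrable (fun t : ℝ => (t ^ 2 - 1) * Real.exp (-(1/2 : ℝ) * t ^ 2)) := by
    have := integrable_sq_exp.sub hexp
    refine this.congr ?_
    filter_upwards with t; simp [Pi.sub_apply]; ring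
  have htend : Filter.Tendsto (fun t : ℝ => -t * Real.exp (-(1/2 : ℝ) * t ^ 2))
      Filter.atTop (nhds 0) := by
    have hlo := rpow_mul_exp_neg_mul_sq_isLittleO_exp_neg (by norm_num : (0:ℝ) < 1/2) 1
    have h0 : Filter.Tendsto (fun t : ℝ => Real.exp (-(1/2 : ℝ) * t)) Filter.atTop (nhds 0) := by
      have hcomp := Real.tendsto_exp_atBot.comp
        (Filter.tendsto_id.const_mul_atTop_of_neg (by norm_num : (-(1/2) : ℝ) < 0))
      exact hcomp.congr fun t => by simp [Function.comp]
    have := hlo.trans_tendsto h0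
    have heq : (fun t : ℝ => -t * Real.exp (-(1/2 : ℝ) * t ^ 2))
        =ᶠ[Filter.atTop] fun t : ℝ => -(t ^ (1:ℝ) * Real.exp (-(1/2 : ℝ) * t ^ 2)) := by
      filter_upwards with t
      rw [Real.rpow_one]; ring
    rw [Filter.tendsto_congr' heq]
    simpa using this.neg
  have htendbot : Filter.Tendsto (fun t : ℝ => -t * Real.exp (-(1/2 : ℝ) * t ^ 2))
      Filter.atBot (nhds 0) := by
    have hG : Filter.Tendsto (fun t : ℝ => t * Real.exp (-(1/2 : ℝ) * t ^ 2))
        Filter.atTop (nhds 0) := by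
      have hn := htend.neg
      rw [neg_zero] at hn
      exact hn.congr fun t => by ring
    have := hG.comp Filter.tendsto_neg_atBot_atTop
    refine Filter.Tendsto.congr (fun t => ?_) this
    simp only [Function.comp_apply, neg_sq, neg_mul]
  have hFTC := MeasureTheory.integral_of_hasDerivAt_of_tendsto hderiv hint htendbot htend
  simp only [sub_self] at hFTC
  have := MeasureTheory.integral_sub integrable_sq_exp hexp
  have heq2 : ∫ t : ℝ, (t ^ 2 - 1) * Real.exp (-(1/2 : ℝ) * t ^ 2)
      = (∫ t : ℝ, t ^ 2 * Real.exp (-(1/2 : ℝ) * t ^ 2)) - ∫ t : ℝ, Real.exp (-(1/2 : ℝ) * t ^ 2) := by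
    rw [← this]
    congr 1; funext t; ring
  rw [hFTC] at heq2
  linarith [heq2.symm]

lemma integrable_sq_g1 : Integrable (fun t : ℝ => t ^ 2 * g1 t) := by
  rw [g1_eq]
  have := integrable_sq_exp.const_mul ((2 * Real.pi) ^ (-(1:ℝ)/2))
  refine this.congr ?_
  filter_upwards with t; ring

lemma integral_sq_g1 : ∫ t, t ^ 2 * g1 t = 1 := by
  rw [g1_eq]
  have h1 : (fun t : ℝ => t ^ 2 * ((2 * Real.pi) ^ (-(1:ℝ)/2) * Real.exp (-(1/2 : ℝ) * t ^ 2)))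
      = fun t : ℝ => (2 * Real.pi) ^ (-(1:ℝ)/2) * (t ^ 2 * Real.exp (-(1/2 : ℝ) * t ^ 2)) := by
    funext t; ring
  rw [h1, MeasureTheory.integral_const_mul, integral_sq_exp, integral_gaussian]
  have : Real.sqrt (π / (1/2)) = Real.sqrt (2 * π) := by norm_num [mul_comm]
  rw [this, sqrt_two_pi_mul]

variable {d : ℕ}

lemma gd_nonneg (y : EuclideanSpace ℝ (Fin d)) : 0 ≤ gaussDensity d 0 1 y := by
  unfold gaussDensity; positivity

lemma gd_continuous : Continuous (gaussDensity d 0 1) := by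
  unfold gaussDensity
  exact continuous_const.mul (Real.continuous_exp.comp (by fun_prop))

lemma gd_meas : Measurable (gaussDensity d 0 1) := gd_continuous.measurable

lemma norm_symm_sq (y : Fin d → ℝ) :
    ‖(MeasurableEquiv.toLp 2 (Fin d → ℝ)) y‖ ^ 2 = ∑ i, (y i) ^ 2 := by
  rw [EuclideanSpace.norm_eq, Real.sq_sqrt (by positivity)]
  congr 1
  funext i
  rw [MeasurableEquiv.coe_toLp]
  simp [PiLp.toLp_apply, Real.norm_eq_abs, sq_abs]

lemma gaussDensity_symm_apply (y : Fin d → ℝ) :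
    gaussDensity d 0 1 ((MeasurableEquiv.toLp 2 (Fin d → ℝ)) y) = ∏ i, g1 (y i) := by
  unfold gaussDensity g1
  rw [sub_zero, mul_one, norm_symm_sq, Finset.prod_mul_distrib, Finset.prod_const]
  congr 1
  · rw [← Real.rpow_natCast ((2 * Real.pi) ^ (-(1:ℝ)/2)) (Finset.univ.card),
      ← Real.rpow_mul (by positivity)]
    congr 1
    simp [Finset.card_univ]
    ring
  · rw [← Real.exp_sum]
    congr 1
    rw [← Finset.sum_div, ← Finset.sum_neg_distrib]
    norm_num

lemma integral_euclid_pi (G : EuclideanSpace ℝ (Fin d) → ℝ) :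
    ∫ ξ, G ξ = ∫ y : Fin d → ℝ, G ((MeasurableEquiv.toLp 2 (Fin d → ℝ)) y) :=
  ((MeasurePreserving.symm _ (EuclideanSpace.volume_preserving_symm_measurableEquiv_toLp (Fin d))).integral_comp
    (MeasurableEquiv.toLp 2 (Fin d → ℝ)).measurableEmbedding G).symm

lemma integrable_euclid_pi_iff (G : EuclideanSpace ℝ (Fin d) → ℝ) :
    Integrable G ↔ Integrable fun y : Fin d → ℝ =>
      G ((MeasurableEquiv.toLp 2 (Fin d → ℝ)) y) :=
  ((MeasurePreserving.symm _ (EuclideanSpace.volume_preserving_symm_measurableEquiv_toLp (Fin d))).integrable_comp_emb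
    (MeasurableEquiv.toLp 2 (Fin d → ℝ)).measurableEmbedding).symm

lemma gd_integrable : Integrable (gaussDensity d 0 1) := by
  rw [integrable_euclid_pi_iff]
  have : (fun y : Fin d → ℝ => gaussDensity d 0 1 ((MeasurableEquiv.toLp 2 (Fin d → ℝ)) y))
      = fun y => ∏ i, g1 (y i) := funext gaussDensity_symm_apply
  rw [this]
  exact Integrable.fintype_prod fun _ => integrable_g1

lemma gd_integral : ∫ ξ, gaussDensity d 0 1 ξ = 1 := by
  rw [integral_euclid_pi]
  simp_rw [gaussDensity_symm_apply]
  rw [MeasureTheory.volume_pi, MeasureTheory.integral_fintype_prod_eq_prod (ι := Fin d) fun _ => g1]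
  simp [integral_g1]

noncomputable def famj (j i : Fin d) : ℝ → ℝ := fun t => (if i = j then t ^ 2 else 1) * g1 t

lemma famj_integrable (j i : Fin d) : Integrable (famj j i) := by
  unfold famj
  rcases eq_or_ne i j with hij | hij
  · simp only [hij, if_pos rfl]
    exact integrable_sq_g1
  · simp only [if_neg hij, one_mul]
    exact integrable_g1

lemma famj_integral (j i : Fin d) : ∫ t, famj j i t = 1 := by
  unfold famj
  rcases eq_or_ne i j with hij | hij
  · simp only [hij, if_pos rfl]
    exact integral_sq_g1
  · simp only [if_neg hij, one_mul]
    exact integral_g1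

lemma prod_famj (j : Fin d) (y : Fin d → ℝ) :
    ∏ i, famj j i (y i) = (y j) ^ 2 * ∏ i, g1 (y i) := by
  unfold famj
  rw [Finset.prod_mul_distrib]
  congr 1
  rw [Finset.prod_ite_eq' Finset.univ j (fun i => (y i) ^ 2)]
  simp

lemma pointwise_normsq (y : Fin d → ℝ) :
    gaussDensity d 0 1 ((MeasurableEquiv.toLp 2 (Fin d → ℝ)) y)
      * ‖(MeasurableEquiv.toLp 2 (Fin d → ℝ)) y‖ ^ 2
    = ∑ j, ∏ i, famj j i (y i) := by
  rw [gaussDensity_symm_apply, norm_symm_sq]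
  rw [Finset.mul_sum]
  refine Finset.sum_congr rfl fun j _ => ?_
  rw [prod_famj]
  ring

lemma integrable_gd_normsq :
    Integrable (fun ξ : EuclideanSpace ℝ (Fin d) => gaussDensity d 0 1 ξ * ‖ξ‖ ^ 2) := by
  rw [integrable_euclid_pi_iff]
  refine (integrable_finset_sum Finset.univ fun j _ =>
    (Integrable.fintype_prod fun i => famj_integrable j i)).congr ?_
  filter_upwards with y
  exact (pointwise_normsq y).symm

lemma integral_gd_normsq :
    ∫ ξ : EuclideanSpace ℝ (Fin d), gaussDensity d 0 1 ξ * ‖ξ‖ ^ 2 = d := by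
  rw [integral_euclid_pi]
  simp_rw [pointwise_normsq]
  rw [integral_finset_sum (μ := volume) Finset.univ fun j _ =>
    (Integrable.fintype_prod fun i => famj_integrable j i)]
  have : ∀ j : Fin d, (∫ y : Fin d → ℝ, ∏ i, famj j i (y i)) = 1 := by
    intro j
    rw [MeasureTheory.volume_pi, MeasureTheory.integral_fintype_prod_eq_prod (ι := Fin d) (famj j)]
    simp [famj_integral]
  simp [this]

lemma integrable_gd_norm :
    Integrable (fun ξ : EuclideanSpace ℝ (Fin d) => gaussDensity d 0 1 ξ * ‖ξ‖) := by
  refine Integrable.mono' (gd_integrable.add integrable_gd_normsq)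
    ((gd_meas.mul measurable_norm).aestronglyMeasurable) ?_
  filter_upwards with ξ
  have h1 : ‖ξ‖ ≤ 1 + ‖ξ‖ ^ 2 := by nlinarith [sq_nonneg (‖ξ‖ - 1), norm_nonneg ξ]
  have h0 := gd_nonneg ξ
  rw [Real.norm_eq_abs, abs_of_nonneg (by positivity)]
  simp only [Pi.add_apply]
  nlinarith [norm_nonneg ξ]

lemma integral_gd_norm_le (hd : 0 < d) :
    ∫ ξ : EuclideanSpace ℝ (Fin d), gaussDensity d 0 1 ξ * ‖ξ‖ ≤ Real.sqrt d := by
  have hs : 0 < Real.sqrt d := Real.sqrt_pos.2 (by exact_mod_cast hd)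
  have hss : Real.sqrt d * Real.sqrt d = d := Real.mul_self_sqrt (by positivity)
  have hpt : ∀ ξ : EuclideanSpace ℝ (Fin d), gaussDensity d 0 1 ξ * ‖ξ‖
      ≤ (1 / (2 * Real.sqrt d)) * (gaussDensity d 0 1 ξ * ‖ξ‖ ^ 2)
        + (Real.sqrt d / 2) * gaussDensity d 0 1 ξ := by
    intro ξ
    have h0 := gd_nonneg ξ
    have h1 : ‖ξ‖ ≤ ‖ξ‖ ^ 2 / (2 * Real.sqrt d) + Real.sqrt d / 2 := by
      rw [div_add_div _ _ (by positivity) (by norm_num : (2:ℝ) ≠ 0), le_div_iff₀ (by positivity)]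
      nlinarith [sq_nonneg (‖ξ‖ - Real.sqrt d)]
    calc gaussDensity d 0 1 ξ * ‖ξ‖
        ≤ gaussDensity d 0 1 ξ * (‖ξ‖ ^ 2 / (2 * Real.sqrt d) + Real.sqrt d / 2) :=
          mul_le_mul_of_nonneg_left h1 h0
      _ = (1 / (2 * Real.sqrt d)) * (gaussDensity d 0 1 ξ * ‖ξ‖ ^ 2)
          + (Real.sqrt d / 2) * gaussDensity d 0 1 ξ := by ring
  have hB : Integrable (fun ξ : EuclideanSpace ℝ (Fin d) =>
      (1 / (2 * Real.sqrt d)) * (gaussDensity d 0 1 ξ * ‖ξ‖ ^ 2)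
        + (Real.sqrt d / 2) * gaussDensity d 0 1 ξ) :=
    (integrable_gd_normsq.const_mul _).add (gd_integrable.const_mul _)
  have hint := MeasureTheory.integral_mono integrable_gd_norm hB hpt
  rw [MeasureTheory.integral_add (integrable_gd_normsq.const_mul _) (gd_integrable.const_mul _),
    MeasureTheory.integral_const_mul, MeasureTheory.integral_const_mul,
    integral_gd_normsq, gd_integral] at hint
  calc ∫ ξ : EuclideanSpace ℝ (Fin d), gaussDensity d 0 1 ξ * ‖ξ‖
      ≤ 1 / (2 * Real.sqrt d) * d + Real.sqrt d / 2 * 1 := hint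
    _ = Real.sqrt d := by
        field_simp
        linarith [hss]

lemma gaussMeasure_eq :
    gaussMeasure d 0 1 = volume.withDensity fun y => ((gaussDensity d 0 1 y).toNNReal : ENNReal) :=
  rfl

lemma integral_density_mul (G : EuclideanSpace ℝ (Fin d) → ℝ) :
    ∫ ξ, G ξ ∂(gaussMeasure d 0 1) = ∫ ξ, gaussDensity d 0 1 ξ * G ξ := by
  rw [gaussMeasure_eq, integral_withDensity_eq_integral_smul gd_meas.real_toNNReal G]
  congr 1
  funext ξ
  rw [NNReal.smul_def, Real.coe_toNNReal _ (gd_nonneg ξ)]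
  rfl

lemma integrable_gauss_iff (G : EuclideanSpace ℝ (Fin d) → ℝ) :
    Integrable G (gaussMeasure d 0 1)
      ↔ Integrable (fun ξ => gaussDensity d 0 1 ξ * G ξ) volume := by
  rw [gaussMeasure_eq, integrable_withDensity_iff_integrable_smul gd_meas.real_toNNReal]
  constructor <;> intro hI <;> refine hI.congr ?_ <;> filter_upwards with ξ <;>
    rw [NNReal.smul_def, Real.coe_toNNReal _ (gd_nonneg ξ)] <;> rfl

lemma gauss_isProbability : IsProbabilityMeasure (gaussMeasure d 0 1) := by
  constructor
  rw [gaussMeasure, withDensity_apply _ MeasurableSet.univ, Measure.restrict_univ,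
    ← ofReal_integral_eq_lintegral_ofReal gd_integrable (ae_of_all _ gd_nonneg), gd_integral]
  simp

lemma integral_gauss_neg (G : EuclideanSpace ℝ (Fin d) → ℝ) :
    ∫ ξ, G (-ξ) ∂(gaussMeasure d 0 1) = ∫ ξ, G ξ ∂(gaussMeasure d 0 1) := by
  rw [integral_density_mul, integral_density_mul]
  have h1 : ∀ ξ : EuclideanSpace ℝ (Fin d),
      gaussDensity d 0 1 ξ * G (-ξ) = (fun ζ => gaussDensity d 0 1 ζ * G ζ) (-ξ) := by
    intro ξ
    simp only [gaussDensity, sub_zero, norm_neg]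
  simp_rw [h1]
  exact MeasureTheory.integral_neg_eq_self (fun ζ => gaussDensity d 0 1 ζ * G ζ) volume


end RWMAux

/-- the RWM rejection rate is bounded by `1/2 + Lh√d + (1/4)Mh²d`
under the smoothness decomposition assumption.  Here `μ` plays the role of the
target distribution π with positive density `p`. -/
theorem rwm_rejection_rate_bound {d : ℕ} (M L : ℝ)
    (p : EuclideanSpace ℝ (Fin d) → ℝ) (hp_meas : Measurable p) (hp_pos : ∀ x, 0 < p x)
    (μ : Measure (EuclideanSpace ℝ (Fin d)))
    (hμ : μ = volume.withDensity fun x => ENNReal.ofReal (p x))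
    [IsProbabilityMeasure μ]
    (f g : EuclideanSpace ℝ (Fin d) → ℝ)
    (f' : EuclideanSpace ℝ (Fin d) → EuclideanSpace ℝ (Fin d))
    (hdecomp : ∀ x, Real.log (p x) = f x + g x)
    (hf : ∀ x, HasGradientAt f (f' x) x)
    (hf' : ∀ x y, ‖f' x - f' y‖ ≤ M * ‖x - y‖)
    (hg : ∀ x y, |g x - g y| ≤ L * ‖x - y‖)
    (h : ℝ) (hh : 0 < h) (x : EuclideanSpace ℝ (Fin d)) :
    1 - ∫ ξ, min 1 (p (x + h • ξ) / p x) ∂(gaussMeasure d 0 1) ≤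
      1 / 2 + L * h * Real.sqrt d + 1 / 4 * M * h ^ 2 * d := by
  classical
  haveI hprob : IsProbabilityMeasure (gaussMeasure d 0 1) := RWMAux.gauss_isProbability
  set γ := gaussMeasure d 0 1 with hγ
  set m : EuclideanSpace ℝ (Fin d) → ℝ := fun ξ => min 1 (p (x + h • ξ) / p x) with hmdef
  have hmmeas : Measurable m := by
    apply Measurable.min measurable_const
    exact (hp_meas.comp ((continuous_const.add (continuous_id.const_smul h)).measurable)).div_const _
  have hm0 : ∀ ξ, 0 ≤ m ξ := fun ξ => le_min zero_le_one (div_nonneg (hp_pos _).le (hp_pos x).le)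
  have hm1 : ∀ ξ, m ξ ≤ 1 := fun ξ => min_le_left _ _
  have hmint : Integrable m γ := by
    refine MeasureTheory.Integrable.mono' (integrable_const 1) hmmeas.aestronglyMeasurable ?_
    filter_upwards with ξ
    rw [Real.norm_eq_abs, abs_of_nonneg (hm0 ξ)]
    exact hm1 ξ
  have hφint : Integrable (fun ξ => 1 - m ξ) γ := (integrable_const 1).sub hmint
  have hsplit : 1 - ∫ ξ, m ξ ∂γ = ∫ ξ, (1 - m ξ) ∂γ := by
    rw [MeasureTheory.integral_sub (integrable_const 1) hmint, MeasureTheory.integral_const]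
    simp
  rw [hsplit]
  rcases Nat.eq_zero_or_pos d with hd | hd
  · subst hd
    have hz : ∀ ξ : EuclideanSpace ℝ (Fin 0), (1:ℝ) - m ξ = 0 := by
      intro ξ
      have hξ0 : ξ = 0 := Subsingleton.elim ξ 0
      rw [hmdef]
      simp only [hξ0, smul_zero, add_zero, div_self (hp_pos x).ne', min_self]
      ring
    simp only [hz]
    rw [MeasureTheory.integral_zero]
    have h1 : Real.sqrt ((0:ℕ) : ℝ) = 0 := by norm_num
    rw [h1]
    norm_num
  · -- d ≥ 1
    have i0 : Fin d := ⟨0, hd⟩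
    set e1 : EuclideanSpace ℝ (Fin d) := EuclideanSpace.single i0 (1:ℝ) with he1def
    have he1 : ‖e1‖ = 1 := by rw [he1def, EuclideanSpace.norm_single]; norm_num
    have hM : 0 ≤ M := by
      have := hf' e1 0
      rw [sub_zero, he1, mul_one] at this
      exact le_trans (norm_nonneg _) this
    have hL : 0 ≤ L := by
      have := hg e1 0
      rw [sub_zero, he1, mul_one] at this
      exact le_trans (abs_nonneg _) this
    have hn : ∀ ξ : EuclideanSpace ℝ (Fin d), ‖h • ξ‖ = h * ‖ξ‖ := fun ξ => by
      rw [norm_smul, Real.norm_eq_abs, abs_of_pos hh]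
    have hpexp : ∀ z, p z = Real.exp (f z + g z) := fun z => by
      rw [← hdecomp z, Real.exp_log (hp_pos z)]
    have hΔ : ∀ ξ, m ξ = min 1 (Real.exp ((f (x + h • ξ) + g (x + h • ξ)) - (f x + g x))) := by
      intro ξ
      rw [hmdef]
      simp only []
      rw [hpexp (x + h • ξ), hpexp x, ← Real.exp_sub]
    have hlow : ∀ ξ : EuclideanSpace ℝ (Fin d),
        ⟪f' x, ξ⟫ * h - (L * h * ‖ξ‖ + M / 2 * h ^ 2 * ‖ξ‖ ^ 2)
          ≤ (f (x + h • ξ) + g (x + h • ξ)) - (f x + g x) := by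
      intro ξ
      have ht := RWMAux.taylor_quadratic hM hf hf' x (x + h • ξ)
      rw [add_sub_cancel_left, real_inner_smul_right] at ht
      have hgg := hg (x + h • ξ) x
      rw [add_sub_cancel_left] at hgg
      have he2 : ‖h • ξ‖ ^ 2 = h ^ 2 * ‖ξ‖ ^ 2 := by rw [hn ξ]; ring
      rw [he2] at ht
      rw [hn ξ] at hgg
      have h1 := abs_le.1 ht
      have h2 := abs_le.1 hgg
      have := h1.1
      have := h2.1
      nlinarith [h1.1, h2.1]
    have hkey : ∀ ξ : EuclideanSpace ℝ (Fin d), (1 - m ξ) + (1 - m (-ξ))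
        ≤ 1 + (L * h * ‖ξ‖ + M / 2 * h ^ 2 * ‖ξ‖ ^ 2) := by
      intro ξ
      rw [hΔ ξ, hΔ (-ξ)]
      have hb0 : 0 ≤ L * h * ‖ξ‖ + M / 2 * h ^ 2 * ‖ξ‖ ^ 2 := by positivity
      refine RWMAux.key_scalar (A := ⟪f' x, ξ⟫ * h) hb0 (hlow ξ) ?_
      have hneg := hlow (-ξ)
      simp only [inner_neg_right, norm_neg] at hneg
      linarith [hneg]
    have hnormint : Integrable (fun ξ : EuclideanSpace ℝ (Fin d) => ‖ξ‖) γ := by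
      rw [hγ, RWMAux.integrable_gauss_iff]
      exact RWMAux.integrable_gd_norm
    have hnormsqint : Integrable (fun ξ : EuclideanSpace ℝ (Fin d) => ‖ξ‖ ^ 2) γ := by
      rw [hγ, RWMAux.integrable_gauss_iff]
      exact RWMAux.integrable_gd_normsq
    have hbint : Integrable
        (fun ξ : EuclideanSpace ℝ (Fin d) => L * h * ‖ξ‖ + M / 2 * h ^ 2 * ‖ξ‖ ^ 2) γ :=
      (hnormint.const_mul _).add (hnormsqint.const_mul _)
    have hφnegint : Integrable (fun ξ : EuclideanSpace ℝ (Fin d) => 1 - m (-ξ)) γ := by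
      refine MeasureTheory.Integrable.mono' (integrable_const 1)
        ((measurable_const.sub (hmmeas.comp measurable_neg)).aestronglyMeasurable) ?_
      filter_upwards with ξ
      rw [Real.norm_eq_abs, abs_of_nonneg (by linarith [hm1 (-ξ)])]
      linarith [hm0 (-ξ)]
    have hsym : ∫ ξ, (1 - m (-ξ)) ∂γ = ∫ ξ, (1 - m ξ) ∂γ := by
      rw [hγ]
      exact RWMAux.integral_gauss_neg (fun ξ => 1 - m ξ)
    have h2I : (2:ℝ) * ∫ ξ, (1 - m ξ) ∂γ = ∫ ξ, ((1 - m ξ) + (1 - m (-ξ))) ∂γ := by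
      rw [MeasureTheory.integral_add hφint hφnegint, hsym]
      ring
    have hmono : ∫ ξ, ((1 - m ξ) + (1 - m (-ξ))) ∂γ
        ≤ ∫ ξ, (1 + (L * h * ‖ξ‖ + M / 2 * h ^ 2 * ‖ξ‖ ^ 2)) ∂γ :=
      MeasureTheory.integral_mono (hφint.add hφnegint) ((integrable_const 1).add hbint) hkey
    have hv1 : ∫ ξ, ‖ξ‖ ∂γ ≤ Real.sqrt d := by
      rw [hγ, RWMAux.integral_density_mul]
      exact RWMAux.integral_gd_norm_le hd
    have hv2 : (∫ ξ : EuclideanSpace ℝ (Fin d), ‖ξ‖ ^ 2 ∂γ) = d := by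
      rw [hγ, RWMAux.integral_density_mul]
      exact RWMAux.integral_gd_normsq
    have hval : ∫ ξ, (1 + (L * h * ‖ξ‖ + M / 2 * h ^ 2 * ‖ξ‖ ^ 2)) ∂γ
        ≤ 1 + (L * h * Real.sqrt d + M / 2 * h ^ 2 * d) := by
      rw [MeasureTheory.integral_add (integrable_const 1) hbint,
        MeasureTheory.integral_add (hnormint.const_mul _) (hnormsqint.const_mul _),
        MeasureTheory.integral_const_mul, MeasureTheory.integral_const_mul,
        MeasureTheory.integral_const, hv2]
      simp only [measure_univ, probReal_univ, ENNReal.toReal_one, smul_eq_mul, one_mul]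
      have hmul : L * h * ∫ ξ, ‖ξ‖ ∂γ ≤ L * h * Real.sqrt d :=
        mul_le_mul_of_nonneg_left hv1 (by positivity)
      linarith
    have hLh : 0 ≤ L * h * Real.sqrt d := by positivity
    linarith [h2I, hmono, hval]
end
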